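/- arXiv:2202.01111 — 11 statements merged into one kernel-verified Lean document; each statement's English description precedes it below -/
import Mathlib

section
/- For every positive integer r, there exists a unique formal power series T in ℚ[[X]] satisfying the functional equation T = 1 + X * T^(r+1). -/
/-!
The map `A ↦ 1 + X * A ^ (r + 1)` raises the `X`-adic order of differences by one, since
`A - B ∣ A ^ (r + 1) - B ^ (r + 1)`. As in Banach's fixed point theorem, such an `X`-adic
contraction has exactly one fixed point: the `X`-adic limit of its iterates, whose `n`-th
coefficient is frozen from the `(n + 1)`-st iterate on.
-/

open PowerSeries Function

namespace PowerSeries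

variable {R : Type*} [CommRing R]

theorem eq_of_forall_X_pow_dvd_sub {A B : R⟦X⟧} (h : ∀ n, (X : R⟦X⟧) ^ n ∣ A - B) : A = B := by
  ext n
  rw [← sub_eq_zero, ← map_sub]
  exact X_pow_dvd_iff.mp (h (n + 1)) n n.lt_succ_self

def IsXAdicContraction (f : R⟦X⟧ → R⟦X⟧) : Prop :=
  ∀ n A B, (X : R⟦X⟧) ^ n ∣ A - B → (X : R⟦X⟧) ^ (n + 1) ∣ f A - f B

noncomputable def iterateLimit (f : R⟦X⟧ → R⟦X⟧) : R⟦X⟧ :=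
  mk fun n => coeff n (f^[n + 1] 0)

theorem isXAdicContraction_add_X_mul_pow (C : R⟦X⟧) (k : ℕ) :
    IsXAdicContraction fun A => C + X * A ^ k := by
  intro n A B h
  rw [show C + X * A ^ k - (C + X * B ^ k) = X * (A ^ k - B ^ k) by ring, pow_succ']
  exact mul_dvd_mul_left X (h.trans (sub_dvd_pow_sub_pow A B k))

namespace IsXAdicContraction

variable {f : R⟦X⟧ → R⟦X⟧} (hf : IsXAdicContraction f)
include hf

theorem X_pow_dvd_iterate_sub (n : ℕ) (A B : R⟦X⟧) : (X : R⟦X⟧) ^ n ∣ f^[n] A - f^[n] B := by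
  induction n with
  | zero => simp
  | succ n ih =>
    rw [iterate_succ_apply', iterate_succ_apply']
    exact hf n _ _ ih

theorem eq_of_isFixedPt {A B : R⟦X⟧} (hA : IsFixedPt f A) (hB : IsFixedPt f B) : A = B :=
  eq_of_forall_X_pow_dvd_sub fun n => by
    have h := hf.X_pow_dvd_iterate_sub n A B
    rwa [(hA.iterate n).eq, (hB.iterate n).eq] at h

theorem X_pow_dvd_iterateLimit_sub (n : ℕ) : (X : R⟦X⟧) ^ n ∣ iterateLimit f - f^[n] 0 := by
  refine X_pow_dvd_iff.mpr fun k hk => ?_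
  obtain ⟨j, rfl⟩ := Nat.exists_eq_add_of_le hk
  have hstable := X_pow_dvd_iff.mp (hf.X_pow_dvd_iterate_sub (k + 1) 0 (f^[j] 0)) k k.lt_succ_self
  rw [map_sub, sub_eq_zero] at hstable
  rw [map_sub, sub_eq_zero, iterateLimit, coeff_mk, hstable, ← iterate_add_apply]

theorem isFixedPt_iterateLimit : IsFixedPt f (iterateLimit f) := by
  refine eq_of_forall_X_pow_dvd_sub fun n => ?_
  cases n with
  | zero => simp
  | succ n =>
    have hstep : (X : R⟦X⟧) ^ (n + 1) ∣ f (iterateLimit f) - f^[n + 1] 0 := by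
      rw [iterate_succ_apply']
      exact hf n _ _ (hf.X_pow_dvd_iterateLimit_sub n)
    simpa using dvd_add hstep (dvd_sub_comm.mp (hf.X_pow_dvd_iterateLimit_sub (n + 1)))

theorem existsUnique_isFixedPt : ∃! A, IsFixedPt f A :=
  ⟨iterateLimit f, hf.isFixedPt_iterateLimit,
    fun _ hA => hf.eq_of_isFixedPt hA hf.isFixedPt_iterateLimit⟩

end IsXAdicContraction

end PowerSeries

theorem fussCatalan_gf_exists_unique_general (r : ℕ) :
    ∃! T : PowerSeries ℚ, T = 1 + PowerSeries.X * T ^ (r + 1) := by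
  simpa only [IsFixedPt, eq_comm] using
    (isXAdicContraction_add_X_mul_pow (1 : ℚ⟦X⟧) (r + 1)).existsUnique_isFixedPt

theorem fussCatalan_gf_exists_unique (r : ℕ) (hr : 0 < r) :
    ∃! T : PowerSeries ℚ, T = 1 + PowerSeries.X * T ^ (r + 1) :=
  fussCatalan_gf_exists_unique_general r
end

section
/- Let r be a positive integer and suppose T ∈ ℚ[[X]] satisfies T = 1 + X * T^(r+1). Then for every natural number n, the coefficient of X^n in T equals (1/(r*n+1)) * choose((r+1)*n, n). -/
/-!
Write `a(n, s)` for the coefficient of `X^n` in `T^s`. Multiplying `T = 1 + X * T^k` by `T^s`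
gives `T^(s+1) = T^s + X * T^(s+k)`, i.e. `a(n+1, s+1) = a(n+1, s) + a(n, s+k)`, with
`a(0, s) = 1` and `a(n+1, 0) = 0`. These determine `a` completely, and the Raney numbers
`s / (k*n + s) * choose (k*n + s) n` satisfy the same recurrence, so by induction on `n` and then
on `s` they are the coefficients. The theorem is the case `k = r + 1`, `s = 1`.
-/

open PowerSeries

/-- The Raney recurrence `R(n+1, s+1) = R(n+1, s) + R(n, s+k)` for
`R(n, s) = s / (k*n + s) * choose (k*n + s) n`, multiplied out by the denominators
`N = k*(n+1) + s` and `N + 1`. -/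
theorem raney_recurrence_cleared {R : Type*} [CommRing R] (k n s : ℕ) :
    ((k * (n + 1) + s + 1 : ℕ) : R) *
        (s * ((k * (n + 1) + s).choose (n + 1) : R) +
          ((s + k : ℕ) : R) * ((k * (n + 1) + s).choose n : R)) =
      ((k * (n + 1) + s : ℕ) : R) * ((s + 1 : ℕ) : R) *
        ((k * (n + 1) + s + 1).choose (n + 1) : R) := by
  have pascal := congrArg (Nat.cast (R := R)) (Nat.choose_succ_succ' (k * (n + 1) + s) n)
  have absorb := congrArg (Nat.cast (R := R)) (Nat.add_one_mul_choose_eq (k * (n + 1) + s) n)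
  push_cast at pascal absorb ⊢
  linear_combination -((k : R) * (n + 1) + s + 1) * s * pascal + k * absorb

section

variable {R : Type*} [CommRing R] {k : ℕ} {T : R⟦X⟧}

theorem constantCoeff_eq_one_of_eq_one_add_X_mul_pow (hT : T = 1 + X * T ^ k) :
    constantCoeff T = 1 := by
  rw [hT]; simp

theorem pow_succ_of_eq_one_add_X_mul_pow (hT : T = 1 + X * T ^ k) (s : ℕ) :
    T ^ (s + 1) = T ^ s + X * T ^ (s + k) := by
  rw [pow_succ, pow_add]
  linear_combination T ^ s * hT

theorem coeff_zero_pow_of_eq_one_add_X_mul_pow (hT : T = 1 + X * T ^ k) (s : ℕ) :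
    coeff 0 (T ^ s) = 1 := by
  rw [coeff_zero_eq_constantCoeff_apply, map_pow, constantCoeff_eq_one_of_eq_one_add_X_mul_pow hT,
    one_pow]

theorem coeff_succ_pow_succ_of_eq_one_add_X_mul_pow (hT : T = 1 + X * T ^ k) (n s : ℕ) :
    coeff (n + 1) (T ^ (s + 1)) = coeff (n + 1) (T ^ s) + coeff n (T ^ (s + k)) := by
  rw [pow_succ_of_eq_one_add_X_mul_pow hT, map_add, coeff_succ_X_mul]

/-- Stated cleared of denominators so that it also holds at `n = s = 0`. -/
theorem natCast_mul_coeff_pow_of_eq_one_add_X_mul_pow [IsDomain R] [CharZero R] (hk : 0 < k)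
    (hT : T = 1 + X * T ^ k) (n s : ℕ) :
    ((k * n + s : ℕ) : R) * coeff n (T ^ s) = s * ((k * n + s).choose n : R) := by
  induction n generalizing s with
  | zero => simp [coeff_zero_pow_of_eq_one_add_X_mul_pow hT]
  | succ n ihn =>
    induction s with
    | zero => simp [coeff_one]
    | succ s ihs =>
      have hN : ((k * (n + 1) + s : ℕ) : R) ≠ 0 := Nat.cast_ne_zero.mpr (by positivity)
      have ihn' := ihn (s + k)
      rw [show k * n + (s + k) = k * (n + 1) + s by ring] at ihn'
      refine mul_left_cancel₀ hN ?_
      rw [coeff_succ_pow_succ_of_eq_one_add_X_mul_pow hT]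
      linear_combination ((k * (n + 1) + s + 1 : ℕ) : R) * (ihs + ihn') +
        raney_recurrence_cleared (R := R) k n s

end

theorem fussCatalan_gf_coeff_general (r : ℕ) (T : PowerSeries ℚ)
    (hT : T = 1 + PowerSeries.X * T ^ (r + 1)) (n : ℕ) :
    PowerSeries.coeff n T =
      (1 / (r * n + 1 : ℚ)) * (Nat.choose ((r + 1) * n) n : ℚ) := by
  have hcoeff := natCast_mul_coeff_pow_of_eq_one_add_X_mul_pow (R := ℚ) (k := r + 1)
    (by omega) hT n 1
  have hchoose := Nat.choose_mul_succ_eq ((r + 1) * n) n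
  rw [show (r + 1) * n + 1 - n = r * n + 1 by rw [add_one_mul]; omega] at hchoose
  have hchoose' : (((r + 1) * n).choose n : ℚ) * ((r + 1) * n + 1) =
      ((r + 1) * n + 1).choose n * (r * n + 1) := by exact_mod_cast hchoose
  rw [pow_one] at hcoeff
  push_cast at hcoeff
  rw [one_div_mul_eq_div, eq_div_iff (by positivity)]
  refine mul_left_cancel₀ (show ((r + 1) * n + 1 : ℚ) ≠ 0 by positivity) ?_
  linear_combination (r * n + 1 : ℚ) * hcoeff - hchoose'

theorem fussCatalan_gf_coeff (r : ℕ) (hr : 0 < r) (T : PowerSeries ℚ)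
    (hT : T = 1 + PowerSeries.X * T ^ (r + 1)) (n : ℕ) :
    PowerSeries.coeff n T =
      (1 / (r * n + 1 : ℚ)) * (Nat.choose ((r + 1) * n) n : ℚ) :=
  fussCatalan_gf_coeff_general r T hT n
end

section
/- For every positive integer r, the formal power series T = Σ_{n≥0} ((1/(r*n+1)) * choose((r+1)*n, n)) * X^n over ℚ satisfies T = 1 + X * T^(r+1). -/
/-!
The series `B x = ∑ₖ R(x, k) Xᵏ` of Raney numbers `R(x, k) = x / (x + (r + 1) k) * C(x + (r + 1) k, k)`
satisfy `B 0 = 1` and, by Pascal's rule, `B (x + 1) = B x + X * B (x + r + 1)`. Comparing coefficients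
degree by degree, this recurrence forces `B (x + y) = B x * B y`, hence `B x = (B 1) ^ x`; the case
`x = 0` of the recurrence then reads `B 1 = 1 + X * (B 1) ^ (r + 1)`, and `B 1` is the Fuss–Catalan series.
-/

open PowerSeries

namespace FussCatalan

/-- `x / (x + (r + 1) k) * C(x + (r + 1) k, k)`, in a form without division, so that `raney r 0 0 = 1`. -/
def raney (r x : ℕ) : ℕ → ℚ
  | 0 => 1
  | k + 1 => (x + (r + 1) * (k + 1)).choose (k + 1) - (r + 1) * (x + r + (r + 1) * k).choose k

variable (r : ℕ)

theorem add_mul_raney (x k : ℕ) :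
    ((x + (r + 1) * k : ℕ) : ℚ) * raney r x k = x * (x + (r + 1) * k).choose k := by
  cases k with
  | zero => simp [raney]
  | succ k =>
    have hN : x + (r + 1) * (k + 1) = x + r + (r + 1) * k + 1 := by ring
    have h := congrArg (Nat.cast : ℕ → ℚ) (Nat.add_one_mul_choose_eq (x + r + (r + 1) * k) k)
    rw [raney, hN]
    push_cast at h ⊢
    linear_combination (-(r + 1 : ℚ)) * h

theorem raney_zero_succ (k : ℕ) : raney r 0 (k + 1) = 0 := by
  have h := add_mul_raney r 0 (k + 1)
  simp only [zero_add, Nat.cast_zero, zero_mul] at h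
  exact (mul_eq_zero.mp h).resolve_left (by positivity)

theorem raney_succ_succ (x k : ℕ) :
    raney r (x + 1) (k + 1) = raney r x (k + 1) + raney r (x + r + 1) k := by
  cases k with
  | zero => simp [raney]
  | succ k =>
    simp only [raney]
    rw [show x + 1 + (r + 1) * (k + 1 + 1) = x + r + 1 + (r + 1) * (k + 1) + 1 by ring,
      show x + 1 + r + (r + 1) * (k + 1) = x + r + 1 + r + (r + 1) * k + 1 by ring,
      show x + (r + 1) * (k + 1 + 1) = x + r + 1 + (r + 1) * (k + 1) by ring,
      show x + r + (r + 1) * (k + 1) = x + r + 1 + r + (r + 1) * k by ring,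
      Nat.choose_succ_succ', Nat.choose_succ_succ' (x + r + 1 + r + (r + 1) * k)]
    push_cast
    ring

theorem fussCatalan_eq_raney_one (n : ℕ) :
    1 / (r * n + 1 : ℚ) * ((r + 1) * n).choose n = raney r 1 n := by
  have hq := Nat.choose_mul_succ_eq ((r + 1) * n) n
  rw [show (r + 1) * n + 1 - n = r * n + 1 by rw [add_mul, one_mul]; omega] at hq
  have h := add_mul_raney r 1 n
  rw [add_comm 1] at h
  have hN : ((r + 1) * n + 1 : ℚ) ≠ 0 := by positivity
  apply mul_left_cancel₀ hN
  push_cast at h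
  rw [h]
  field_simp
  rw [mul_comm, mul_comm (r * n + 1 : ℚ)]
  exact_mod_cast hq

def raneySeries (x : ℕ) : PowerSeries ℚ := mk (raney r x)

theorem raneySeries_zero : raneySeries r 0 = 1 := by
  ext (_ | k)
  · simp [raneySeries, raney]
  · simp [raneySeries, raney_zero_succ, coeff_one]

theorem raneySeries_succ (x : ℕ) :
    raneySeries r (x + 1) = raneySeries r x + X * raneySeries r (x + r + 1) := by
  ext (_ | k)
  · simp [raneySeries, raney]
  · simp [raneySeries, raney_succ_succ, coeff_succ_X_mul]

theorem raneySeries_add (x y : ℕ) : raneySeries r (x + y) = raneySeries r x * raneySeries r y := by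
  ext n
  induction n generalizing x y with
  | zero => simp [raneySeries, raney]
  | succ n ih =>
    induction x with
    | zero => simp [raneySeries_zero]
    | succ x ihx =>
      rw [add_right_comm, raneySeries_succ r (x + y), raneySeries_succ r x, add_mul, map_add,
        map_add, ihx, mul_assoc, coeff_succ_X_mul, coeff_succ_X_mul, ← ih (x + r + 1) y,
        show x + r + 1 + y = x + y + r + 1 by ring]

theorem raneySeries_eq_pow (x : ℕ) : raneySeries r x = raneySeries r 1 ^ x := by
  induction x with
  | zero => exact raneySeries_zero r
  | succ x ih => rw [raneySeries_add, ih, pow_succ]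

end FussCatalan

theorem fussCatalan_gf_satisfies_general (r : ℕ) :
    (PowerSeries.mk fun n => (1 / (r * n + 1 : ℚ)) * (Nat.choose ((r + 1) * n) n : ℚ)) =
      1 + PowerSeries.X *
        (PowerSeries.mk fun n =>
          (1 / (r * n + 1 : ℚ)) * (Nat.choose ((r + 1) * n) n : ℚ)) ^ (r + 1) := by
  have hT : (PowerSeries.mk fun n => 1 / (r * n + 1 : ℚ) * ((r + 1) * n).choose n) =
      FussCatalan.raneySeries r 1 :=
    PowerSeries.ext fun n => by
      simp only [FussCatalan.raneySeries, coeff_mk, FussCatalan.fussCatalan_eq_raney_one]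
  rw [hT, ← FussCatalan.raneySeries_eq_pow, ← FussCatalan.raneySeries_zero r]
  simpa using FussCatalan.raneySeries_succ r 0

theorem fussCatalan_gf_satisfies (r : ℕ) (hr : 0 < r) :
    (PowerSeries.mk fun n => (1 / (r * n + 1 : ℚ)) * (Nat.choose ((r + 1) * n) n : ℚ)) =
      1 + PowerSeries.X *
        (PowerSeries.mk fun n =>
          (1 / (r * n + 1 : ℚ)) * (Nat.choose ((r + 1) * n) n : ℚ)) ^ (r + 1) :=
  fussCatalan_gf_satisfies_general r
end

section
/- For every positive integer r and every natural number n, the natural number r*n + 1 divides the binomial coefficient choose((r+1)*n, n). (Consequently the Fuss–Catalan number FC_n^{(r)} = choose((r+1)*n, n)/(r*n+1) is a nonnegative integer.) -/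
/-!
Absorption gives `C(a + k, k) * (a + k + 1) = C(a + k + 1, k) * (a + 1)`, so `a + 1` divides
`C(a + k, k)` whenever it is coprime to `a + k + 1`, i.e. to `k`. With `a = r * n` and `k = n`
the coprimality `gcd(r * n + 1, n) = 1` is immediate.
-/

theorem Nat.succ_dvd_choose_add_of_coprime {a k : ℕ} (h : (a + 1).Coprime k) :
    a + 1 ∣ (a + k).choose k := by
  have absorption : (a + k).choose k * (a + k + 1) = (a + k + 1).choose k * (a + 1) := by
    simpa [show a + k + 1 - k = a + 1 by omega] using Nat.choose_mul_succ_eq (a + k) k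
  have hcop : (a + 1).Coprime (a + k + 1) := by
    rwa [show a + k + 1 = a + 1 + k by ring, Nat.coprime_self_add_right]
  exact hcop.dvd_of_dvd_mul_right ⟨_, absorption.trans (mul_comm _ _)⟩

theorem fussCatalan_integrality_general (r : ℕ) (n : ℕ) :
    (r * n + 1) ∣ Nat.choose ((r + 1) * n) n := by
  have hcop : (r * n + 1).Coprime n := by simp
  rw [add_one_mul]
  exact Nat.succ_dvd_choose_add_of_coprime hcop

theorem fussCatalan_integrality (r : ℕ) (hr : 0 < r) (n : ℕ) :
    (r * n + 1) ∣ Nat.choose ((r + 1) * n) n :=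
  fussCatalan_integrality_general r n
end

section
/- Fix a positive integer r and a natural number n. The number of lists l of integers of length (r+1)*n such that every entry of l equals 1 or −r, exactly n entries equal −r (hence exactly r*n entries equal 1), and every prefix of l has nonnegative sum, equals choose((r+1)*n, n)/(r*n+1). -/
/-!
Cycle lemma. Prepending a step `1` to an `r`-ballot sequence gives a word of length
`(r + 1) * n + 1` over the steps `1` and `-r` with `n` steps `-r`, all of whose nonempty
prefixes have positive sum. Every such word (with no prefix condition) has total sum `1`, and
exactly one of its `(r + 1) * n + 1` rotations has all nonempty prefix sums positive: existence
by rotating past the last minimum of the prefix sums, uniqueness because two such rotations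
would split the word into two pieces of positive sum. Hence
`#ballot * ((r + 1) * n + 1) = choose ((r + 1) * n + 1) n`, and the identity
`choose (m + 1) n * (m + 1 - n) = choose m n * (m + 1)` finishes.
-/

theorem Nat.exists_last_argmin {β : Type*} [LinearOrder β] (f : ℕ → β) (m : ℕ) :
    ∃ j ≤ m, (∀ i ≤ m, f j ≤ f i) ∧ ∀ i ≤ m, j < i → f j < f i := by
  induction m with
  | zero => exact ⟨0, le_rfl, fun i hi => by rw [Nat.le_zero.1 hi], fun i hi hji => by omega⟩
  | succ m ih =>
    obtain ⟨j, hjm, hmin, hlast⟩ := ih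
    by_cases hnew : f (m + 1) ≤ f j
    · refine ⟨m + 1, le_rfl, fun i hi => ?_, fun i hi hji => by omega⟩
      rcases hi.lt_or_eq with hi | rfl
      · exact hnew.trans (hmin i (by omega))
      · exact le_rfl
    · refine ⟨j, by omega, fun i hi => ?_, fun i hi hji => ?_⟩ <;> rcases hi.lt_or_eq with hi | rfl
      · exact hmin i (by omega)
      · exact (lt_of_not_ge hnew).le
      · exact hlast i (by omega) hji
      · exact lt_of_not_ge hnew

namespace List

theorem sum_eq_length_add_mul_count {l : List ℤ} {v : ℤ} (h : ∀ x ∈ l, x = 1 ∨ x = v) :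
    l.sum = l.length + (v - 1) * l.count v := by
  induction l with
  | nil => simp
  | cons x t ih =>
    rw [sum_cons, ih fun y hy => h y (mem_cons_of_mem x hy), length_cons, count_cons]
    rcases h x mem_cons_self with rfl | rfl <;> split_ifs <;> simp_all <;> ring

def Dominating (l : List ℤ) : Prop :=
  ∀ j, 0 < j → j ≤ l.length → 0 < (l.take j).sum

theorem dominating_one_cons_iff {l : List ℤ} :
    Dominating (1 :: l) ↔ ∀ p, p <+: l → 0 ≤ p.sum := by
  constructor
  · intro h p hp
    have := h (p.length + 1) p.length.succ_pos (by simpa using hp.length_le)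
    rw [take_succ_cons, sum_cons, ← prefix_iff_eq_take.1 hp] at this
    omega
  · rintro h (_ | j) hj hjl
    · omega
    · rw [take_succ_cons, sum_cons]
      have := h _ (take_prefix j l)
      omega

theorem sum_take_rotate_of_add_le {l : List ℤ} {k j : ℕ} (h : k + j ≤ l.length) :
    ((l.rotate k).take j).sum = (l.take (k + j)).sum - (l.take k).sum := by
  rw [rotate_eq_drop_append_take (by omega), take_append, take_add, sum_append, sum_append,
    length_drop, show j - (l.length - k) = 0 by omega, take_zero, sum_nil]
  ring

theorem sum_take_rotate_of_length_le_add {l : List ℤ} {k j : ℕ} (hk : k ≤ l.length)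
    (hj : j ≤ l.length) (h : l.length ≤ k + j) :
    ((l.rotate k).take j).sum = l.sum - (l.take k).sum + (l.take (k + j - l.length)).sum := by
  rw [rotate_eq_drop_append_take hk, take_append, sum_append, length_drop,
    take_of_length_le (by simp; omega), take_take, min_eq_left (by omega),
    ← sum_take_add_sum_drop l k, show k + j - l.length = j - (l.length - k) by omega]
  ring

theorem exists_dominating_rotate {l : List ℤ} (h : 0 < l.sum) :
    ∃ k < l.length, Dominating (l.rotate k) := by
  obtain ⟨k, hkL, hmin, hlast⟩ := Nat.exists_last_argmin (fun i => (l.take i).sum) l.length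
  have hk0 : (l.take k).sum ≤ 0 := by simpa using hmin 0 (Nat.zero_le _)
  have hkL : k < l.length := by
    refine lt_of_le_of_ne hkL fun hk => ?_
    rw [hk, take_length] at hk0
    omega
  refine ⟨k, hkL, fun j hj hjL => ?_⟩
  rw [length_rotate] at hjL
  by_cases hkj : k + j ≤ l.length
  · rw [sum_take_rotate_of_add_le hkj]
    linarith [hlast (k + j) hkj (by omega)]
  · rw [sum_take_rotate_of_length_le_add hkL.le hjL (by omega)]
    linarith [hmin (k + j - l.length) (by omega)]

theorem two_le_sum_of_dominating_rotate {l : List ℤ} {k : ℕ} (hl : Dominating l)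
    (hlk : Dominating (l.rotate k)) (hk : 0 < k) (hkL : k < l.length) : 2 ≤ l.sum := by
  have hhead := hl k hk hkL.le
  have htail := hlk (l.length - k) (by omega) (by simp)
  rw [sum_take_rotate_of_add_le (by omega), show k + (l.length - k) = l.length by omega,
    take_length] at htail
  omega

theorem Dominating.eq_of_rotate_eq {l₁ l₂ : List ℤ} {k₁ k₂ : ℕ} (h₁ : Dominating l₁)
    (h₂ : Dominating l₂) (hsum : l₁.sum ≤ 1) (hk₁ : k₁ < l₁.length) (hk₂ : k₂ < l₂.length)
    (h : l₁.rotate k₁ = l₂.rotate k₂) : l₁ = l₂ ∧ k₁ = k₂ := by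
  wlog hle : k₁ ≤ k₂ generalizing l₁ l₂ k₁ k₂
  · have hsum₂ : l₂.sum ≤ 1 := by
      rwa [← (rotate_perm l₂ k₂).sum_eq, ← h, (rotate_perm l₁ k₁).sum_eq]
    exact (this h₂ h₁ hsum₂ hk₂ hk₁ h.symm (by omega)).imp Eq.symm Eq.symm
  have hl₁ : l₁ = l₂.rotate (k₂ - k₁) := by
    apply rotate_injective k₁
    simp only [h, rotate_rotate, Nat.sub_add_cancel hle]
  obtain rfl : k₁ = k₂ := by
    by_contra hne
    have := two_le_sum_of_dominating_rotate h₂ (hl₁ ▸ h₁) (by omega) (by omega)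
    rw [hl₁, (rotate_perm _ _).sum_eq] at hsum
    omega
  simpa using hl₁

theorem card_dominating_mul_length {s : Set (List ℤ)} {m : ℕ} (hlen : ∀ l ∈ s, l.length = m)
    (hsum : ∀ l ∈ s, l.sum = 1) (hrot : ∀ l ∈ s, ∀ k, l.rotate k ∈ s) :
    Nat.card {l // l ∈ s ∧ Dominating l} * m = Nat.card s := by
  rw [← Nat.card_fin m, ← Nat.card_prod]
  refine Nat.card_eq_of_bijective (fun p => ⟨p.1.1.rotate p.2, hrot _ p.1.2.1 _⟩) ⟨?_, ?_⟩
  · rintro ⟨⟨l₁, hs₁, hd₁⟩, k₁⟩ ⟨⟨l₂, hs₂, hd₂⟩, k₂⟩ h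
    obtain ⟨rfl, hk⟩ := hd₁.eq_of_rotate_eq hd₂ (hsum l₁ hs₁).le
      (by simp [hlen l₁ hs₁]) (by simp [hlen l₂ hs₂]) (congrArg Subtype.val h)
    exact Prod.ext rfl (Fin.ext hk)
  · rintro ⟨l, hs⟩
    obtain ⟨k, hk, hd⟩ := exists_dominating_rotate (by rw [hsum l hs]; exact one_pos)
    rw [hlen l hs] at hk
    refine ⟨(⟨l.rotate k, hrot l hs k, hd⟩, ⟨(m - k) % m, Nat.mod_lt _ (by omega)⟩), ?_⟩
    have hl : l.length = m := hlen l hs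
    ext1
    change (l.rotate k).rotate ((m - k) % m) = l
    rw [← hl, ← length_rotate (n := k), rotate_mod, length_rotate, rotate_rotate,
      Nat.add_sub_cancel' (by omega), rotate_length]

end List

theorem card_lists_length_count_eq_choose {α : Type*} [DecidableEq α] {a b : α} (hab : a ≠ b)
    (m k : ℕ) :
    Nat.card {l : List α // l.length = m ∧ (∀ x ∈ l, x = a ∨ x = b) ∧ l.count b = k} =
      m.choose k := by
  let positions (l : List α) (hl : l.length = m) : Finset (Fin m) :=
    {i | List.Vector.get ⟨l, hl⟩ i = b}
  have mem_positions (l : List α) (hl : l.length = m) (i : Fin m) :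
      i ∈ positions l hl ↔ l[i.1] = b := by
    simp only [positions]
    rw [Finset.mem_filter]
    simp [List.Vector.get]
  have hcard (l : List α) (hl : l.length = m) : (positions l hl).card = l.count b :=
    Fin.card_filter_univ_eq_vector_get_eq_count b ⟨l, hl⟩
  rw [show m.choose k = Nat.card {s : Finset (Fin m) // s.card = k} by
    simp [Fintype.card_finset_len]]
  refine Nat.card_eq_of_bijective (fun l => ⟨positions l.1 l.2.1, (hcard _ _).trans l.2.2.2⟩)
    ⟨?_, ?_⟩
  · rintro ⟨l₁, hlen₁, hmem₁, _⟩ ⟨l₂, hlen₂, hmem₂, _⟩ h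
    refine Subtype.ext (List.ext_getElem (hlen₁.trans hlen₂.symm) fun i h₁ h₂ => ?_)
    have hi := congrArg (fun t : {s : Finset (Fin m) // s.card = k} => ⟨i, hlen₁ ▸ h₁⟩ ∈ t.1) h
    simp only [mem_positions, eq_iff_iff] at hi
    rcases hmem₁ _ (List.getElem_mem h₁) with e₁ | e₁ <;>
      rcases hmem₂ _ (List.getElem_mem h₂) with e₂ | e₂ <;> simp_all
  · rintro ⟨s, rfl⟩
    let l := List.ofFn fun i => if i ∈ s then b else a
    have hl : l.length = m := List.length_ofFn
    have hpos : positions l hl = s := by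
      ext i
      by_cases hi : i ∈ s <;> simp [mem_positions, l, hi, hab]
    refine ⟨⟨l, hl, fun x hx => ?_, by rw [← hcard l hl, hpos]⟩, Subtype.ext hpos⟩
    obtain ⟨i, rfl⟩ := List.mem_ofFn.1 hx
    by_cases hi : i ∈ s <;> simp [hi]

def stepSeqs (r m k : ℕ) : Set (List ℤ) :=
  {l | l.length = m ∧ (∀ x ∈ l, x = 1 ∨ x = -(r : ℤ)) ∧ l.count (-(r : ℤ)) = k}

def ballotSeqs (r n : ℕ) : Set (List ℤ) :=
  {l | l.length = (r + 1) * n ∧ (∀ x ∈ l, x = 1 ∨ x = -(r : ℤ)) ∧ l.count (-(r : ℤ)) = n ∧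
    ∀ p, p <+: l → 0 ≤ p.sum}

section StepSeqs

variable {r m k : ℕ} {l : List ℤ}

theorem card_stepSeqs (r m k : ℕ) : Nat.card (stepSeqs r m k) = m.choose k :=
  card_lists_length_count_eq_choose (by omega) m k

theorem rotate_mem_stepSeqs (hl : l ∈ stepSeqs r m k) (j : ℕ) : l.rotate j ∈ stepSeqs r m k := by
  obtain ⟨hlen, hmem, hcount⟩ := hl
  have hperm := l.rotate_perm j
  exact ⟨hperm.length_eq.trans hlen, fun x hx => hmem x (hperm.subset hx),
    (hperm.count_eq _).trans hcount⟩

theorem sum_of_mem_stepSeqs (hl : l ∈ stepSeqs r ((r + 1) * k + 1) k) : l.sum = 1 := by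
  obtain ⟨hlen, hmem, hcount⟩ := hl
  rw [List.sum_eq_length_add_mul_count hmem, hlen, hcount]
  push_cast
  ring

theorem one_cons_mem_stepSeqs_iff : 1 :: l ∈ stepSeqs r (m + 1) k ↔ l ∈ stepSeqs r m k := by
  have : ((1 : ℤ) == -(r : ℤ)) = false := beq_false_of_ne (by omega)
  simp [stepSeqs, List.count_cons, this]

theorem mem_ballotSeqs_iff {n : ℕ} :
    l ∈ ballotSeqs r n ↔ l ∈ stepSeqs r ((r + 1) * n) n ∧ ∀ p, p <+: l → 0 ≤ p.sum := by
  simp only [ballotSeqs, stepSeqs, Set.mem_ofPred_eq, and_assoc]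

end StepSeqs

theorem card_ballotSeqs_mul (r n : ℕ) :
    Nat.card (ballotSeqs r n) * ((r + 1) * n + 1) = ((r + 1) * n + 1).choose n := by
  rw [← card_stepSeqs, ← List.card_dominating_mul_length (fun l hl => hl.1)
    (fun l hl => sum_of_mem_stepSeqs hl) (fun l hl => rotate_mem_stepSeqs hl)]
  congr 1
  refine Nat.card_eq_of_bijective (fun l => ⟨1 :: l.1, ?_⟩) ⟨?_, ?_⟩
  · obtain ⟨hs, hprefix⟩ := mem_ballotSeqs_iff.1 l.2
    exact ⟨one_cons_mem_stepSeqs_iff.2 hs, List.dominating_one_cons_iff.2 hprefix⟩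
  · intro l₁ l₂ h
    exact Subtype.ext (List.cons_injective (congrArg Subtype.val h))
  · rintro ⟨_ | ⟨x, t⟩, hs, hd⟩
    · simp [stepSeqs] at hs
    have hx : 0 < x := by simpa using hd 1 one_pos (by simp)
    obtain rfl : x = 1 := by
      rcases hs.2.1 x List.mem_cons_self with h | h
      · exact h
      · omega
    exact ⟨⟨t, mem_ballotSeqs_iff.2
      ⟨one_cons_mem_stepSeqs_iff.1 hs, List.dominating_one_cons_iff.1 hd⟩⟩, rfl⟩

theorem ballot_sequences_card_general (r : ℕ) (n : ℕ) :
    Nat.card {l : List ℤ //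
        l.length = (r + 1) * n ∧
        (∀ x ∈ l, x = 1 ∨ x = -(r : ℤ)) ∧
        l.count (-(r : ℤ)) = n ∧
        (∀ p : List ℤ, p <+: l → 0 ≤ p.sum)} =
      Nat.choose ((r + 1) * n) n / (r * n + 1) := by
  have hcount : Nat.card (ballotSeqs r n) * (r * n + 1) = ((r + 1) * n).choose n := by
    have hchoose := Nat.choose_mul_succ_eq ((r + 1) * n) n
    rw [show (r + 1) * n + 1 - n = r * n + 1 by ring_nf; omega, ← card_ballotSeqs_mul r n,
      mul_right_comm] at hchoose
    exact Nat.eq_of_mul_eq_mul_right (Nat.succ_pos _) hchoose.symm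
  exact (Nat.div_eq_of_eq_mul_left (Nat.succ_pos _) hcount.symm).symm

theorem ballot_sequences_card (r : ℕ) (hr : 0 < r) (n : ℕ) :
    Nat.card {l : List ℤ //
        l.length = (r + 1) * n ∧
        (∀ x ∈ l, x = 1 ∨ x = -(r : ℤ)) ∧
        l.count (-(r : ℤ)) = n ∧
        (∀ p : List ℤ, p <+: l → 0 ≤ p.sum)} =
      Nat.choose ((r + 1) * n) n / (r * n + 1) :=
  ballot_sequences_card_general r n
end

section
/- Let r and m be positive integers, let G be the star graph on Fin (r+2) in which vertex 0 is adjacent to every nonzero vertex and there are no other edges, and fix a nonzero vertex i. Then the number of walks w from i to i in G such that (a) every dart of G (i.e., every edge together with a direction of traversal) is traversed by w exactly m times, and (b) w contains no three consecutive vertices of the form v, 0, v with v ≠ 0, is equal to the number of lists l whose entries are nonzero vertices of Fin (r+2), of length m*(r+1), such that every nonzero vertex of Fin (r+2) occurs in l exactly m times, any two consecutive entries of l are distinct, the last entry of l equals i, and the first entry of l is different from i. -/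
/-- The star graph on `Fin (r + 2)`: vertex `0` is adjacent to every nonzero vertex,
and there are no other edges. -/
def starGraph (r : ℕ) : SimpleGraph (Fin (r + 2)) where
  Adj a b := (a = 0 ∧ b ≠ 0) ∨ (a ≠ 0 ∧ b = 0)
  symm := by constructor; intro a b h; tauto
  loopless := by constructor; intro a h; tauto

/-!
A closed walk at a leaf `i` of the star alternates between leaves and the center `0`, so it
is determined by the word `l = [l₁, …, lₙ]` of leaves it visits after `i`: its support is
`i, 0, l₁, 0, l₂, …, 0, lₙ` with `lₙ = i`. The dart `0 → v` is traversed once for each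
occurrence of `v` in `l`, and the dart `v → 0` once for each occurrence of `v` in `i :: l`
other than the last letter; since `l` ends in `i`, that is again the number of occurrences
of `v` in `l`. A pattern `v, 0, v` in the support is exactly a repeated letter `v, v` in
`i :: l`.
-/

section StarSupport

variable {α : Type*}

def starSupport (c a : α) (l : List α) : List α :=
  a :: l.flatMap fun v => [c, v]

variable {c a b : α} {l : List α}

@[simp]
theorem starSupport_nil : starSupport c a [] = [a] := rfl

@[simp]
theorem starSupport_cons : starSupport c a (b :: l) = a :: c :: starSupport c b l := rfl

theorem starSupport_ne_nil : starSupport c a l ≠ [] := List.cons_ne_nil _ _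

theorem zip_tail_starSupport_cons :
    (starSupport c a (b :: l)).zip (starSupport c a (b :: l)).tail =
      (a, c) :: (c, b) :: (starSupport c b l).zip (starSupport c b l).tail := rfl

theorem starSupport_injective : Function.Injective (starSupport c a) := by
  intro l l' h
  induction l generalizing a l' with
  | nil => cases l' <;> simp_all
  | cons b l ih =>
    obtain _ | ⟨b', l'⟩ := l'
    · simp at h
    · simp only [starSupport_cons, List.cons.injEq, true_and] at h
      obtain rfl : b = b' := (List.cons.inj h).1
      rw [ih h]

theorem getLast?_starSupport : (starSupport c a l).getLast? = (a :: l).getLast? := by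
  induction l generalizing a with
  | nil => rfl
  | cons b l ih =>
    rw [starSupport_cons, List.getLast?_cons_cons, List.getLast?_cons_cons, ← ih]
    rfl

theorem infix_starSupport_cons_iff {v : α} (hv : v ≠ c) :
    [v, c, v] <:+: starSupport c a (b :: l) ↔
      (v = a ∧ a = b) ∨ [v, c, v] <:+: starSupport c b l := by
  rw [starSupport_cons, List.infix_cons_iff, List.infix_cons_iff]
  simp only [starSupport, List.cons_prefix_cons, List.nil_prefix, and_true, true_and, hv,
    false_and, false_or]
  exact or_congr_left (and_congr_right fun h => by rw [h])

theorem forall_not_infix_starSupport_iff (h : c ∉ a :: l) :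
    (∀ v, v ≠ c → ¬ [v, c, v] <:+: starSupport c a l) ↔ (a :: l).IsChain (· ≠ ·) := by
  induction l generalizing a with
  | nil =>
    simp only [starSupport_nil, List.isChain_singleton, iff_true]
    exact fun v _ hv => by simpa using hv.length_le
  | cons b l ih =>
    simp only [List.mem_cons, not_or] at h
    have ha : a ≠ c := Ne.symm h.1
    rw [List.isChain_cons_cons, ← ih (by simp [h.2.1, h.2.2])]
    constructor
    · intro H
      exact ⟨fun hab => H a ha ((infix_starSupport_cons_iff ha).2 (Or.inl ⟨rfl, hab⟩)),
        fun v hv hinf => H v hv ((infix_starSupport_cons_iff hv).2 (Or.inr hinf))⟩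
    · rintro ⟨hab, H⟩ v hv hinf
      rcases (infix_starSupport_cons_iff hv).1 hinf with ⟨rfl, hab'⟩ | hinf
      exacts [hab hab', H v hv hinf]

variable [DecidableEq α]

theorem count_zip_tail_starSupport_center_fst (h : c ∉ a :: l) (v : α) :
    ((starSupport c a l).zip (starSupport c a l).tail).count (c, v) = l.count v := by
  induction l generalizing a with
  | nil => simp
  | cons b l ih =>
    simp only [List.mem_cons, not_or] at h
    rw [zip_tail_starSupport_cons, List.count_cons, List.count_cons, List.count_cons,
      ih (by simp [h.2.1, h.2.2])]
    simp [Ne.symm h.1]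

theorem count_zip_tail_starSupport_center_snd (h : c ∉ l) (v : α) :
    ((starSupport c a l).zip (starSupport c a l).tail).count (v, c) =
      (a :: l).dropLast.count v := by
  induction l generalizing a with
  | nil => simp
  | cons b l ih =>
    simp only [List.mem_cons, not_or] at h
    rw [zip_tail_starSupport_cons, List.count_cons, List.count_cons, ih h.2,
      List.dropLast_cons_cons, List.count_cons]
    simp [Ne.symm h.1]

end StarSupport

namespace List

variable {α : Type*} {a c : α} {l : List α}

theorem isChain_ne_cons_iff :
    (a :: l).IsChain (· ≠ ·) ↔ l.IsChain (· ≠ ·) ∧ l.head? ≠ some a := by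
  rw [isChain_cons, and_comm]
  refine and_congr Iff.rfl ?_
  cases l.head? <;> simp [eq_comm]

theorem dropLast_cons_perm_of_getLast? (h : l.getLast? = some a) : (a :: l).dropLast ~ l := by
  have hl : l ≠ [] := by rintro rfl; simp at h
  rw [dropLast_cons_of_ne_nil hl]
  conv_rhs => rw [← dropLast_append_getLast? a h]
  exact (perm_append_singleton a _).symm

theorem length_eq_mul_card_sub_one_of_count_eq [Fintype α] [DecidableEq α] {m : ℕ}
    (hc : c ∉ l) (h : ∀ v, v ≠ c → l.count v = m) : l.length = m * (Fintype.card α - 1) :=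
  calc l.length = ∑ v ∈ Finset.univ.erase c, l.count v := by
        rw [← sum_toFinset_count_eq_length]
        refine Finset.sum_subset (fun v hv => ?_)
          (fun v _ hv => count_eq_zero.2 (by simpa using hv))
        exact Finset.mem_erase.2 ⟨fun hvc => hc (hvc ▸ mem_toFinset.1 hv), Finset.mem_univ v⟩
    _ = ∑ _v ∈ Finset.univ.erase c, m :=
        Finset.sum_congr rfl fun v hv => h v (Finset.ne_of_mem_erase hv)
    _ = m * (Fintype.card α - 1) := by simp [Finset.card_erase_of_mem, mul_comm]

end List

namespace SimpleGraph.Walk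

variable {V : Type*} {G : SimpleGraph V}

theorem map_toProd_darts {u v : V} (p : G.Walk u v) :
    p.darts.map Dart.toProd = p.support.zip p.support.tail := by
  induction p with
  | nil => rfl
  | cons h p ih =>
    rw [darts_cons, support_cons, List.map_cons, ih, List.tail_cons, ← p.cons_tail_support]
    rfl

theorem count_darts_eq_count_zip_support [DecidableEq V] {u v : V} (p : G.Walk u v)
    (d : G.Dart) : p.darts.count d = (p.support.zip p.support.tail).count d.toProd := by
  rw [← map_toProd_darts, List.count_map_of_injective _ _ Dart.toProd_injective]

end SimpleGraph.Walk
namespace starGraph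

variable {r : ℕ} {a b : Fin (r + 2)}

theorem adj_zero (ha : a ≠ 0) : (starGraph r).Adj a 0 := Or.inr ⟨ha, rfl⟩

theorem zero_adj (hb : b ≠ 0) : (starGraph r).Adj 0 b := Or.inl ⟨rfl, hb⟩

theorem eq_zero_of_adj (h : (starGraph r).Adj a b) (ha : a ≠ 0) : b = 0 := by
  rcases h with ⟨rfl, -⟩ | ⟨-, rfl⟩
  exacts [absurd rfl ha, rfl]

theorem isChain_adj_starSupport {l : List (Fin (r + 2))} (h : 0 ∉ a :: l) :
    (starSupport (0 : Fin (r + 2)) a l).IsChain (starGraph r).Adj := by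
  induction l generalizing a with
  | nil => exact List.isChain_singleton a
  | cons b l ih =>
    simp only [List.mem_cons, not_or] at h
    exact .cons_cons (adj_zero (Ne.symm h.1))
      (.cons_cons (zero_adj (Ne.symm h.2.1)) (ih (by simp [h.2.1, h.2.2])))

theorem exists_support_eq_starSupport {u v : Fin (r + 2)} (w : (starGraph r).Walk u v)
    (hu : u ≠ 0) (hv : v ≠ 0) :
    ∃ l, 0 ∉ u :: l ∧ w.support = starSupport (0 : Fin (r + 2)) u l :=
  match w with
  | .nil => ⟨[], by simpa using hu.symm, rfl⟩
  | .cons h .nil => absurd (eq_zero_of_adj h hu) hv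
  | .cons h (.cons (v := c) h' w) => by
    obtain rfl := eq_zero_of_adj h hu
    obtain ⟨l, hl, hw⟩ := exists_support_eq_starSupport w h'.ne.symm hv
    refine ⟨c :: l, List.not_mem_cons_of_ne_of_not_mem hu.symm hl, ?_⟩
    rw [SimpleGraph.Walk.support_cons, SimpleGraph.Walk.support_cons, hw]
    rfl

def walkOfList (l : List (Fin (r + 2))) (h : 0 ∉ a :: l) (hb : (a :: l).getLast? = some b) :
    (starGraph r).Walk a b :=
  (SimpleGraph.Walk.ofSupport (starSupport 0 a l) starSupport_ne_nil
    (isChain_adj_starSupport h)).copy rfl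
    (Option.some_injective _ (by rw [← List.getLast?_eq_some_getLast, getLast?_starSupport, hb]))

theorem support_walkOfList (l : List (Fin (r + 2))) (h : 0 ∉ a :: l)
    (hb : (a :: l).getLast? = some b) :
    (walkOfList l h hb).support = starSupport (0 : Fin (r + 2)) a l :=
  (SimpleGraph.Walk.support_copy _ _ _).trans (SimpleGraph.Walk.support_ofSupport _ _)

theorem forall_count_darts_eq_iff {w : (starGraph r).Walk a b} {l : List (Fin (r + 2))}
    (hw : w.support = starSupport (0 : Fin (r + 2)) a l) (h : 0 ∉ a :: l) (m : ℕ) :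
    (∀ d : (starGraph r).Dart, w.darts.count d = m) ↔
      ∀ v, v ≠ 0 → l.count v = m ∧ (a :: l).dropLast.count v = m := by
  simp only [SimpleGraph.Walk.count_darts_eq_count_zip_support, hw]
  constructor
  · intro H v hv
    refine ⟨?_, ?_⟩
    · rw [← count_zip_tail_starSupport_center_fst h]
      exact H ⟨(0, v), zero_adj hv⟩
    · rw [← count_zip_tail_starSupport_center_snd (List.not_mem_of_not_mem_cons h)]
      exact H ⟨(v, 0), adj_zero hv⟩
  · rintro H ⟨⟨x, y⟩, ⟨(rfl : x = 0), hy⟩ | ⟨hx, (rfl : y = 0)⟩⟩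
    · exact (count_zip_tail_starSupport_center_fst h y).trans (H y hy).1
    · exact (count_zip_tail_starSupport_center_snd (List.not_mem_of_not_mem_cons h) x).trans
        (H x hx).2

theorem forall_count_darts_eq_and_not_infix_iff {i : Fin (r + 2)} {m : ℕ} (hm : 0 < m)
    {w : (starGraph r).Walk i i} {l : List (Fin (r + 2))}
    (hw : w.support = starSupport (0 : Fin (r + 2)) i l) (h : 0 ∉ i :: l) :
    ((∀ d : (starGraph r).Dart, w.darts.count d = m) ∧
        (∀ v : Fin (r + 2), v ≠ 0 → ¬ [v, 0, v] <:+: w.support)) ↔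
      (l.length = m * (r + 1) ∧ (∀ x ∈ l, x ≠ 0) ∧
        (∀ v : Fin (r + 2), v ≠ 0 → l.count v = m) ∧ l.IsChain (· ≠ ·) ∧
        l.getLast? = some i ∧ l.head? ≠ some i) := by
  have hl : 0 ∉ l := List.not_mem_of_not_mem_cons h
  have hlast : (i :: l).getLast? = some i := by
    rw [← getLast?_starSupport, ← hw, List.getLast?_eq_some_getLast w.support_ne_nil,
      w.getLast_support]
  rw [forall_count_darts_eq_iff hw h, hw, forall_not_infix_starSupport_iff h,
    List.isChain_ne_cons_iff]
  constructor
  · rintro ⟨hcount, hchain, hhead⟩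
    obtain ⟨b, l', rfl⟩ : ∃ b l', l = b :: l' := List.exists_cons_of_ne_nil <| by
      rintro rfl
      simpa [hm.ne] using (hcount i (List.ne_of_not_mem_cons h).symm).1
    rw [List.getLast?_cons_cons] at hlast
    have hcount' : ∀ v, v ≠ 0 → (b :: l').count v = m := fun v hv => (hcount v hv).1
    refine ⟨?_, fun x hx h0 => hl (h0 ▸ hx), hcount', hchain, hlast, hhead⟩
    simpa using List.length_eq_mul_card_sub_one_of_count_eq hl hcount'
  · rintro ⟨-, -, hcount, hchain, hlast, hhead⟩
    refine ⟨fun v hv => ⟨hcount v hv, ?_⟩, hchain, hhead⟩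
    rw [(List.dropLast_cons_perm_of_getLast? hlast).count_eq, hcount v hv]

end starGraph

theorem star_walks_eq_smirnov_words_general (r m : ℕ) (hm : 0 < m)
    (i : Fin (r + 2)) (hi : i ≠ 0) :
    Nat.card {w : (starGraph r).Walk i i //
        (∀ d : (starGraph r).Dart, w.darts.count d = m) ∧
        (∀ v : Fin (r + 2), v ≠ 0 → ¬ [v, 0, v] <:+: w.support)} =
      Nat.card {l : List (Fin (r + 2)) //
        l.length = m * (r + 1) ∧
        (∀ x ∈ l, x ≠ 0) ∧
        (∀ v : Fin (r + 2), v ≠ 0 → l.count v = m) ∧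
        l.Chain' (· ≠ ·) ∧
        l.getLast? = some i ∧
        l.head? ≠ some i} := by
  have h0 {l : List (Fin (r + 2))} (hl : ∀ x ∈ l, x ≠ 0) : 0 ∉ i :: l :=
    List.not_mem_cons_of_ne_of_not_mem hi.symm fun h => hl 0 h rfl
  have hlast {l : List (Fin (r + 2))} (hl : l.getLast? = some i) :
      (i :: l).getLast? = some i := by
    simp [List.getLast?_cons, hl]
  refine (Nat.card_eq_of_bijective
    (fun l => ⟨starGraph.walkOfList l.1 (h0 l.2.2.1) (hlast l.2.2.2.2.2.1),
      (starGraph.forall_count_darts_eq_and_not_infix_iff hm (starGraph.support_walkOfList ..)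
        (h0 l.2.2.1)).2 l.2⟩) ⟨?_, ?_⟩).symm
  · rintro ⟨l, _⟩ ⟨l', _⟩ h
    refine Subtype.ext (starSupport_injective (c := 0) (a := i) ?_)
    simpa [starGraph.support_walkOfList] using congrArg (·.1.support) h
  · rintro ⟨w, hw⟩
    obtain ⟨l, hl, hsupp⟩ := starGraph.exists_support_eq_starSupport w hi hi
    have hL := (starGraph.forall_count_darts_eq_and_not_infix_iff hm hsupp hl).1 hw
    exact ⟨⟨l, hL⟩, Subtype.ext (SimpleGraph.Walk.ext_support
      (by rw [starGraph.support_walkOfList, hsupp]))⟩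

theorem star_walks_eq_smirnov_words (r m : ℕ) (hr : 0 < r) (hm : 0 < m)
    (i : Fin (r + 2)) (hi : i ≠ 0) :
    Nat.card {w : (starGraph r).Walk i i //
        (∀ d : (starGraph r).Dart, w.darts.count d = m) ∧
        (∀ v : Fin (r + 2), v ≠ 0 → ¬ [v, 0, v] <:+: w.support)} =
      Nat.card {l : List (Fin (r + 2)) //
        l.length = m * (r + 1) ∧
        (∀ x ∈ l, x ≠ 0) ∧
        (∀ v : Fin (r + 2), v ≠ 0 → l.count v = m) ∧
        l.Chain' (· ≠ ·) ∧
        l.getLast? = some i ∧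
        l.head? ≠ some i} :=
  star_walks_eq_smirnov_words_general r m hm i hi
end

section
/- For all positive integers r and m, (r+1)! divides the number of lists l over Fin (r+1) of length m*(r+1) such that every element of Fin (r+1) occurs in l exactly m times, any two consecutive entries of l are distinct, and the first entry of l is different from the last entry of l. -/
/-!
Relabelling the letters of a word by a permutation of `Fin (r + 1)` preserves the letter counts,
the Smirnov property and the circular condition, so the symmetric group acts on the set being
counted. Since `m > 0`, every letter occurs in each such word, hence only the identity fixes a
word: the action is free, every orbit has `(r + 1)!` elements, and the orbits partition the set.
-/

open Equiv MulAction Function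

namespace List

variable {α β : Type*}

instance mulAction {M : Type*} [Monoid M] [MulAction M α] : MulAction M (List α) where
  smul m l := l.map (m • ·)
  one_smul l := by change map _ l = l; simp
  mul_smul m n l := by change map _ l = map _ (map _ l); simp [mul_smul]

theorem stabilizer_eq_bot_of_forall_mem {G : Type*} [Group G] [MulAction G α] [FaithfulSMul G α]
    {l : List α} (h : ∀ a, a ∈ l) : stabilizer G l = ⊥ := by
  refine (Subgroup.eq_bot_iff_forall _).2 fun g hg => eq_of_smul_eq_smul (α := α) fun a => ?_
  have hfix : l.map (g • ·) = l.map id := (mem_stabilizer_iff.1 hg).trans (map_id l).symm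
  rw [one_smul]
  exact map_inj_left.1 hfix a (h a)

def IsSmirnov (l : List α) : Prop := l.IsChain (· ≠ ·)

def IsCircularSmirnov (l : List α) : Prop := l.IsSmirnov ∧ l.head? ≠ l.getLast?

theorem isSmirnov_map {f : α → β} (hf : Injective f) {l : List α} :
    (l.map f).IsSmirnov ↔ l.IsSmirnov := by
  simp only [IsSmirnov, isChain_map, hf.ne_iff]

theorem isCircularSmirnov_map {f : α → β} (hf : Injective f) {l : List α} :
    (l.map f).IsCircularSmirnov ↔ l.IsCircularSmirnov := by
  rw [IsCircularSmirnov, IsCircularSmirnov, isSmirnov_map hf, head?_map, getLast?_map,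
    (Option.map_injective hf).ne_iff]

theorem count_map_perm [DecidableEq α] (σ : Equiv.Perm α) (l : List α) (a : α) :
    (l.map σ).count a = l.count (σ.symm a) := by
  simpa using count_map_of_injective l σ σ.injective (σ.symm a)

end List

theorem MulAction.card_dvd_card_of_stabilizer_eq_bot {G X : Type*} [Group G] [MulAction G X]
    (h : ∀ x : X, stabilizer G x = ⊥) : Nat.card G ∣ Nat.card X := by
  rw [Nat.card_congr (selfEquivOrbitsQuotientProd h), Nat.card_prod]
  exact dvd_mul_left _ _

open Nat in
theorem factorial_card_dvd_card_of_perm_invariant {α : Type*} [Finite α] {P : List α → Prop}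
    (hP : ∀ (σ : Perm α) (l : List α), P l → P (l.map σ)) (hmem : ∀ l, P l → ∀ a, a ∈ l) :
    (Nat.card α)! ∣ Nat.card {l // P l} := by
  let S : SubMulAction (Perm α) (List α) := ⟨{l | P l}, fun σ _ => hP σ _⟩
  rw [← Nat.card_perm]
  refine card_dvd_card_of_stabilizer_eq_bot (X := S) fun l => ?_
  rw [SubMulAction.stabilizer_of_subMul]
  exact List.stabilizer_eq_bot_of_forall_mem (hmem _ l.2)

theorem factorial_dvd_circular_smirnov_count_general (r m : ℕ) (hm : 0 < m) :
    (r + 1).factorial ∣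
      Nat.card {l : List (Fin (r + 1)) //
        l.length = m * (r + 1) ∧
        (∀ j : Fin (r + 1), l.count j = m) ∧
        l.Chain' (· ≠ ·) ∧
        l.head? ≠ l.getLast?} := by
  nth_rw 1 [← Nat.card_fin (r + 1)]
  refine factorial_card_dvd_card_of_perm_invariant ?_ ?_
  · rintro σ l ⟨hlen, hcount, hsmirnov⟩
    exact ⟨by rwa [List.length_map], fun j => by rw [List.count_map_perm, hcount],
      (List.isCircularSmirnov_map σ.injective).2 hsmirnov⟩
  · rintro l ⟨-, hcount, -⟩ a
    exact List.count_pos_iff.1 (hcount a ▸ hm)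

theorem factorial_dvd_circular_smirnov_count (r m : ℕ) (hr : 0 < r) (hm : 0 < m) :
    (r + 1).factorial ∣
      Nat.card {l : List (Fin (r + 1)) //
        l.length = m * (r + 1) ∧
        (∀ j : Fin (r + 1), l.count j = m) ∧
        l.Chain' (· ≠ ·) ∧
        l.head? ≠ l.getLast?} :=
  factorial_dvd_circular_smirnov_count_general r m hm
end

section
/- Let n be a positive integer and fix a letter a ∈ Fin n. Define S_a ∈ MvPowerSeries (Fin n) ℚ by: for every d : Fin n →₀ ℕ, the coefficient of S_a at d is the number of lists over Fin n in which any two consecutive entries are distinct, no entry equals a, and each letter j occurs exactly d j times (in particular the constant coefficient is 1, counting the empty list). Define W_a ∈ MvPowerSeries (Fin n) ℚ by: the coefficient of W_a at d is the number of nonempty lists over Fin n in which any two consecutive entries are distinct, the first entry equals a, either the list has length 1 or its last entry differs from a, and each letter j occurs exactly d j times. Then (1 + W_a − X_a) * (1 − X_a * (S_a − 1)) = 1 in MvPowerSeries (Fin n) ℚ, where X_a denotes the power series of the single variable indexed by a. -/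
/-!
Let `𝒜` be the class of Smirnov words that are empty, or start at `a` without ending at `a`; its
generating function `A` is `1 + W_a - X_a`. Cutting a nonempty word of `𝒜` just before its last `a`
writes it uniquely as `u ++ a :: v` with `u ∈ 𝒜` and `v` a nonempty Smirnov word avoiding `a`, and
those words `a :: v` have generating function `X_a (S_a - 1)`. Hence `A = 1 + A X_a (S_a - 1)`.
-/

open MvPowerSeries Finset

namespace SmirnovWords

variable {α : Type*}

theorem exists_append_cons_of_mem {a : α} {l : List α} (h : a ∈ l) :
    ∃ u v, a ∉ v ∧ u ++ a :: v = l := by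
  induction l with
  | nil => simp at h
  | cons b l ih =>
    by_cases hl : a ∈ l
    · obtain ⟨u, v, hv, rfl⟩ := ih hl
      exact ⟨b :: u, v, hv, rfl⟩
    · obtain rfl : a = b := by simpa [hl] using h
      exact ⟨[], l, hl, rfl⟩

theorem eq_of_append_cons_eq {a : α} {u v u' v' : List α} (hv : a ∉ v) (hv' : a ∉ v')
    (h : u ++ a :: v = u' ++ a :: v') : u = u' := by
  rcases List.append_eq_append_iff.1 h with ⟨w, rfl, hw⟩ | ⟨w, rfl, hw⟩
  · cases w with
    | nil => simp
    | cons b w =>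
      simp only [List.cons_append, List.cons.injEq] at hw
      exact absurd (hw.2 ▸ by simp) hv
  · cases w with
    | nil => simp
    | cons b w =>
      simp only [List.cons_append, List.cons.injEq] at hw
      exact absurd (hw.2 ▸ by simp) hv'

/-- The class `𝒜` of the header, whose generating function is `1 + W_a - X_a`. -/
def StartsNotEnds (a : α) (l : List α) : Prop :=
  l = [] ∨ l.IsChain (· ≠ ·) ∧ l.head? = some a ∧ l.getLast? ≠ some a

theorem StartsNotEnds.append_cons {a : α} {u v : List α} (hu : StartsNotEnds a u) (hne : v ≠ [])
    (hv : v.IsChain (· ≠ ·)) (ha : ∀ x ∈ v, x ≠ a) : StartsNotEnds a (u ++ a :: v) := by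
  refine Or.inr ⟨List.isChain_append.2 ⟨?_, ?_, ?_⟩, ?_, ?_⟩
  · rcases hu with rfl | ⟨hu, -⟩
    exacts [List.isChain_nil, hu]
  · exact List.isChain_cons.2 ⟨fun y hy => (ha y (List.mem_of_mem_head? hy)).symm, hv⟩
  · intro x hx y hy hxy
    obtain rfl : a = y := by simpa using hy
    subst hxy
    rcases hu with rfl | ⟨-, -, hlast⟩
    exacts [by simp at hx, hlast hx]
  · rcases hu with rfl | ⟨-, hhead, -⟩
    · rfl
    · simp [List.head?_append, hhead]
  · rw [List.getLast?_append_of_ne_nil _ (List.cons_ne_nil _ _), List.getLast?_cons,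
      List.getLast?_eq_some_getLast hne]
    simpa using ha _ (List.getLast_mem hne)

theorem StartsNotEnds.exists_append_cons {a : α} {l : List α} (hl : StartsNotEnds a l)
    (hne : l ≠ []) : ∃ u v, StartsNotEnds a u ∧
      (v ≠ [] ∧ v.IsChain (· ≠ ·) ∧ ∀ x ∈ v, x ≠ a) ∧ u ++ a :: v = l := by
  obtain rfl | ⟨hchain, hhead, hlast⟩ := hl
  · exact absurd rfl hne
  obtain ⟨u, v, hav, rfl⟩ := exists_append_cons_of_mem (List.mem_of_mem_head? hhead)
  obtain ⟨hu, hv, hjoin⟩ := List.isChain_append.1 hchain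
  have hv_ne : v ≠ [] := by
    rintro rfl
    simp at hlast
  refine ⟨u, v, ?_, ⟨hv_ne, (List.isChain_cons.1 hv).2, fun x hx h => hav (h ▸ hx)⟩, rfl⟩
  rcases eq_or_ne u [] with rfl | hu_ne
  · exact Or.inl rfl
  · refine Or.inr ⟨hu, by simpa [List.head?_append_of_ne_nil _ hu_ne] using hhead, ?_⟩
    intro h
    exact hjoin a h a rfl rfl

theorem startsAt_or_nil_iff_startsNotEnds_or_singleton (a : α) (l : List α) :
    (l ≠ [] ∧ l.IsChain (· ≠ ·) ∧ l.head? = some a ∧ (l.length = 1 ∨ l.getLast? ≠ some a)) ∨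
      l = [] ↔ StartsNotEnds a l ∨ l = [a] := by
  rcases l with _ | ⟨b, _ | ⟨c, l⟩⟩ <;> simp [StartsNotEnds]

section GeneratingFunction

variable [DecidableEq α] (R : Type*) [CommSemiring R]

noncomputable def weight (l : List α) : α →₀ ℕ :=
  Multiset.toFinsupp l

theorem weight_eq_iff {l : List α} {d : α →₀ ℕ} : weight l = d ↔ ∀ j, l.count j = d j := by
  simp [weight, Finsupp.ext_iff, Multiset.toFinsupp_apply]

theorem weight_append (u v : List α) : weight (u ++ v) = weight u + weight v := by
  simp [weight, ← Multiset.coe_add]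

noncomputable def ofWeight (d : α →₀ ℕ) : Finset (List α) :=
  (Multiset.lists (Finsupp.toMultiset d)).toFinset

theorem mem_ofWeight {l : List α} {d : α →₀ ℕ} : l ∈ ofWeight d ↔ weight l = d := by
  rw [ofWeight, Multiset.mem_toFinset, Multiset.mem_lists_iff, Multiset.quot_mk_to_coe, weight,
    ← Multiset.toFinsupp_symm_apply, eq_comm, AddEquiv.eq_symm_apply]

noncomputable def gf (P : List α → Prop) : MvPowerSeries α R :=
  fun d => Nat.card {l : List α // P l ∧ weight l = d}

theorem coeff_gf_eq_natCard (P : List α → Prop) (d : α →₀ ℕ) :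
    coeff d (gf R P) = Nat.card {l : List α // P l ∧ weight l = d} :=
  rfl

theorem gf_eq_of_coeff {P : List α → Prop} {f : MvPowerSeries α R}
    (h : ∀ d, coeff d f = Nat.card {l : List α // P l ∧ ∀ j, l.count j = d j}) : f = gf R P := by
  ext d
  rw [h, coeff_gf_eq_natCard]
  simp only [weight_eq_iff]

theorem coeff_gf (P : List α → Prop) [DecidablePred P] (d : α →₀ ℕ) :
    coeff d (gf R P) = #{l ∈ ofWeight d | P l} := by
  rw [← Nat.card_eq_finsetCard]
  exact congrArg _ <| Nat.card_congr <|
    Equiv.subtypeEquivRight fun l => by simp [mem_ofWeight, and_comm]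

theorem gf_eq_monomial (w : List α) : gf R (· = w) = monomial (weight w) 1 := by
  classical
  ext d
  rw [coeff_gf, coeff_monomial, filter_eq', apply_ite card]
  simp [mem_ofWeight, eq_comm]

theorem gf_eq_one : gf R (· = ([] : List α)) = 1 := by
  rw [gf_eq_monomial, show weight ([] : List α) = 0 by simp [weight], monomial_zero_one]

theorem gf_eq_X (a : α) : gf R (· = [a]) = X a := by
  rw [gf_eq_monomial, X_def, show weight [a] = fun₀ | a => 1 by simp [weight]]

variable {R}

theorem gf_or {P Q : List α → Prop} (h : ∀ l, P l → ¬ Q l) :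
    gf R (fun l => P l ∨ Q l) = gf R P + gf R Q := by
  classical
  ext d
  rw [map_add, coeff_gf, coeff_gf, coeff_gf, filter_or, card_union_of_disjoint
    (disjoint_filter.2 fun l _ => h l)]
  push_cast
  rfl

theorem gf_eq_one_add {P : List α → Prop} (hP : P []) :
    gf R P = 1 + gf R (fun l => l ≠ [] ∧ P l) := by
  rw [← gf_eq_one R, ← gf_or fun l h h' => h'.1 h]
  congr
  ext l
  rcases eq_or_ne l [] with rfl | hl <;> simp [*]

theorem gf_append {P Q T : List α → Prop} (hT : ∀ l, T l ↔ ∃ u v, P u ∧ Q v ∧ u ++ v = l)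
    (hunique : ∀ u v u' v', P u → Q v → P u' → Q v' → u ++ v = u' ++ v' → u = u') :
    gf R T = gf R P * gf R Q := by
  classical
  ext d
  simp only [coeff_mul, coeff_gf]
  suffices #{l ∈ ofWeight d | T l} =
      ∑ p ∈ antidiagonal d, #{u ∈ ofWeight p.1 | P u} * #{v ∈ ofWeight p.2 | Q v} by
    rw [this]
    push_cast
    rfl
  simp_rw [← card_product]
  rw [← card_sigma]
  symm
  refine card_nbij (fun x => x.2.1 ++ x.2.2) ?_ ?_ ?_
  · rintro ⟨p, u, v⟩ hx
    simp only [coe_sigma, Set.mem_sigma_iff, mem_coe, HasAntidiagonal.mem_antidiagonal,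
      mem_product, mem_filter, mem_ofWeight] at hx ⊢
    exact ⟨by rw [weight_append, hx.2.1.1, hx.2.2.1, hx.1],
      (hT _).2 ⟨u, v, hx.2.1.2, hx.2.2.2, rfl⟩⟩
  · rintro ⟨p, u, v⟩ hx ⟨p', u', v'⟩ hx' h
    simp only [coe_sigma, Set.mem_sigma_iff, mem_coe, HasAntidiagonal.mem_antidiagonal,
      mem_product, mem_filter, mem_ofWeight] at hx hx' h
    obtain rfl := hunique u v u' v' hx.2.1.2 hx.2.2.2 hx'.2.1.2 hx'.2.2.2 h
    obtain rfl := List.append_cancel_left h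
    obtain rfl : p = p' := Prod.ext (hx.2.1.1.symm.trans hx'.2.1.1) (hx.2.2.1.symm.trans hx'.2.2.1)
    rfl
  · intro l hl
    rw [mem_coe, mem_filter, mem_ofWeight] at hl
    obtain ⟨u, v, hu, hv, rfl⟩ := (hT l).1 hl.2
    refine ⟨⟨(weight u, weight v), u, v⟩, ?_, rfl⟩
    simp [mem_ofWeight, ← weight_append, hl.1, hu, hv]

theorem gf_cons {Q : List α → Prop} (a : α) :
    gf R (fun l => ∃ v, Q v ∧ a :: v = l) = X a * gf R Q := by
  rw [← gf_eq_X]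
  exact gf_append (fun l => by simp) fun u v u' v' hu _ hu' _ _ => hu.trans hu'.symm

theorem gf_startsNotEnds_eq_one_add_mul (a : α) :
    gf R (StartsNotEnds a) = 1 + gf R (StartsNotEnds a) *
      gf R (fun x => ∃ v, (v ≠ [] ∧ v.IsChain (· ≠ ·) ∧ ∀ y ∈ v, y ≠ a) ∧ a :: v = x) := by
  conv_lhs => rw [gf_eq_one_add (Or.inl rfl : StartsNotEnds a [])]
  rw [gf_append (fun l => ?_) ?_]
  · rintro u _ u' _ - ⟨v, ⟨-, -, hv⟩, rfl⟩ - ⟨v', ⟨-, -, hv'⟩, rfl⟩ h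
    exact eq_of_append_cons_eq (fun h => hv a h rfl) (fun h => hv' a h rfl) h
  · constructor
    · rintro ⟨hne, hl⟩
      obtain ⟨u, v, hu, hv, rfl⟩ := hl.exists_append_cons hne
      exact ⟨u, a :: v, hu, ⟨v, hv, rfl⟩, rfl⟩
    · rintro ⟨u, _, hu, ⟨v, ⟨hne, hv, ha⟩, rfl⟩, rfl⟩
      exact ⟨by simp, hu.append_cons hne hv ha⟩

end GeneratingFunction

end SmirnovWords

open SmirnovWords in
theorem smirnov_start_not_end_gf_general (n : ℕ) (a : Fin n)
    (Sa Wa : MvPowerSeries (Fin n) ℚ)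
    (hSa : ∀ d : Fin n →₀ ℕ,
      MvPowerSeries.coeff d Sa =
        (Nat.card {l : List (Fin n) //
          l.Chain' (· ≠ ·) ∧ (∀ x ∈ l, x ≠ a) ∧ ∀ j : Fin n, l.count j = d j} : ℚ))
    (hWa : ∀ d : Fin n →₀ ℕ,
      MvPowerSeries.coeff d Wa =
        (Nat.card {l : List (Fin n) //
          l ≠ [] ∧ l.Chain' (· ≠ ·) ∧ l.head? = some a ∧
          (l.length = 1 ∨ l.getLast? ≠ some a) ∧ ∀ j : Fin n, l.count j = d j} : ℚ)) :
    (1 + Wa - MvPowerSeries.X a) * (1 - MvPowerSeries.X a * (Sa - 1)) = 1 := by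
  have hS : Sa = gf ℚ (fun l => l.IsChain (· ≠ ·) ∧ ∀ x ∈ l, x ≠ a) :=
    gf_eq_of_coeff ℚ fun d => by simp only [hSa, and_assoc]; rfl
  have hW : Wa = gf ℚ (fun l => l ≠ [] ∧ l.IsChain (· ≠ ·) ∧ l.head? = some a ∧
      (l.length = 1 ∨ l.getLast? ≠ some a)) :=
    gf_eq_of_coeff ℚ fun d => by simp only [hWa, and_assoc]; rfl
  have hA : 1 + Wa - X a = gf ℚ (StartsNotEnds a) := by
    have h := congrArg (gf ℚ) <| funext fun l =>
      propext (startsAt_or_nil_iff_startsNotEnds_or_singleton a l)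
    rw [gf_or (fun l h h' => h.1 h'), gf_or (fun l h h' => by simp [h', StartsNotEnds] at h),
      gf_eq_one, gf_eq_X, ← hW] at h
    rw [add_comm, h, add_sub_cancel_right]
  have hB : X a * (Sa - 1) =
      gf ℚ (fun x => ∃ v, (v ≠ [] ∧ v.IsChain (· ≠ ·) ∧ ∀ y ∈ v, y ≠ a) ∧ a :: v = x) := by
    rw [gf_cons, hS, gf_eq_one_add (by simp), add_sub_cancel_left]
  rw [hA, hB]
  linear_combination gf_startsNotEnds_eq_one_add_mul (R := ℚ) a

theorem smirnov_start_not_end_gf (n : ℕ) (hn : 0 < n) (a : Fin n)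
    (Sa Wa : MvPowerSeries (Fin n) ℚ)
    (hSa : ∀ d : Fin n →₀ ℕ,
      MvPowerSeries.coeff d Sa =
        (Nat.card {l : List (Fin n) //
          l.Chain' (· ≠ ·) ∧ (∀ x ∈ l, x ≠ a) ∧ ∀ j : Fin n, l.count j = d j} : ℚ))
    (hWa : ∀ d : Fin n →₀ ℕ,
      MvPowerSeries.coeff d Wa =
        (Nat.card {l : List (Fin n) //
          l ≠ [] ∧ l.Chain' (· ≠ ·) ∧ l.head? = some a ∧
          (l.length = 1 ∨ l.getLast? ≠ some a) ∧ ∀ j : Fin n, l.count j = d j} : ℚ)) :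
    (1 + Wa - MvPowerSeries.X a) * (1 - MvPowerSeries.X a * (Sa - 1)) = 1 :=
  smirnov_start_not_end_gf_general n a Sa Wa hSa hWa
end

section
/- Let n be a positive integer. Define C ∈ MvPowerSeries (Fin n) ℚ by: for every d : Fin n →₀ ℕ, the coefficient of C at d is the number of nonempty lists over Fin n in which any two consecutive entries are distinct, either the list has length 1 or its first entry differs from its last entry, and each letter j occurs exactly d j times. For each a ∈ Fin n, define S_a ∈ MvPowerSeries (Fin n) ℚ by: the coefficient of S_a at d is the number of lists over Fin n in which any two consecutive entries are distinct, no entry equals a, and each letter j occurs exactly d j times. Then C = Σ_{a ∈ Fin n} ( X_a − 1 + (1 − X_a * (S_a − 1))⁻¹ ), where the inverse is the multiplicative inverse in MvPowerSeries (Fin n) ℚ (which exists since 1 − X_a * (S_a − 1) has constant coefficient 1). -/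
/-!
A circular Smirnov word is either a single letter `a` or a Smirnov word that starts with `a` and
does not end with `a`. Together with the empty word, the words of the second kind starting with
`a` are exactly the concatenations `a w₁ a w₂ ⋯ a wₖ` of blocks with every `wᵢ` a nonempty Smirnov
word avoiding `a`, and the factorisation is unique since each `wᵢ` runs up to the next `a`.
Generating functions turn disjoint unions into sums and unique factorisations into products, so
these words have generating function `(1 - X a * (S a - 1))⁻¹`.
-/

open Finset MvPowerSeries Function

namespace Language

variable {α : Type*} [DecidableEq α] (R : Type*) [CommSemiring R]

noncomputable def gf (L : Language α) : MvPowerSeries α R :=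
  fun d => Nat.card {l : List α // l ∈ L ∧ Multiset.toFinsupp (l : Multiset α) = d}

noncomputable def wordsWithContent (d : α →₀ ℕ) : Finset (List α) :=
  (Multiset.lists (Finsupp.toMultiset d)).toFinset

variable {R}

lemma mem_wordsWithContent {d : α →₀ ℕ} {l : List α} :
    l ∈ wordsWithContent d ↔ Multiset.toFinsupp (l : Multiset α) = d := by
  rw [wordsWithContent, Multiset.mem_toFinset, Multiset.mem_lists_iff, Multiset.quot_mk_to_coe,
    ← Multiset.toFinsupp_symm_apply, AddEquiv.symm_apply_eq, eq_comm]

omit [DecidableEq α] in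
@[simp] lemma mem_singleton {w l : List α} : l ∈ ({w} : Language α) ↔ l = w := Iff.rfl

lemma coeff_gf (L : Language α) [DecidablePred (· ∈ L)] (d : α →₀ ℕ) :
    coeff d (gf R L) = #{l ∈ wordsWithContent d | l ∈ L} := by
  rw [coeff_apply, gf, ← Nat.card_eq_finsetCard]
  exact congrArg Nat.cast <| Nat.card_congr <| Equiv.subtypeEquivRight fun l => by
    rw [mem_filter, mem_wordsWithContent, and_comm]

lemma eq_gf_of_coeff {f : MvPowerSeries α R} {L : Language α}
    (h : ∀ d, coeff d f = Nat.card {l : List α // l ∈ L ∧ ∀ j, l.count j = d j}) :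
    f = gf R L :=
  MvPowerSeries.ext fun d => by
    simp only [h, coeff_apply, gf, Finsupp.ext_iff, Multiset.toFinsupp_apply,
      Multiset.coe_count, eq_comm]

lemma gf_add {L M : Language α} (h : Disjoint L M) : gf R (L + M) = gf R L + gf R M := by
  classical
  ext d
  have hunion : {l ∈ wordsWithContent d | l ∈ L + M} =
      {l ∈ wordsWithContent d | l ∈ L} ∪ {l ∈ wordsWithContent d | l ∈ M} := by
    ext l
    simp only [mem_filter, mem_union, mem_add, and_or_left]
  rw [map_add, coeff_gf, coeff_gf, coeff_gf, hunion, ← Nat.cast_add, card_union_of_disjoint]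
  exact disjoint_filter.2 fun _ _ hL hM => Set.disjoint_left.1 h hL hM

lemma gf_iSup {ι : Type*} [Fintype ι] {L : ι → Language α} (h : Pairwise (Disjoint on L)) :
    gf R (⨆ i, L i) = ∑ i, gf R (L i) := by
  classical
  ext d
  have hunion : {l ∈ wordsWithContent d | l ∈ ⨆ i, L i} =
      univ.biUnion fun i => {l ∈ wordsWithContent d | l ∈ L i} := by
    ext l
    simp only [mem_filter, mem_biUnion, mem_univ, true_and, mem_iSup, exists_and_left]
  simp only [map_sum, coeff_gf, hunion, ← Nat.cast_sum]
  rw [card_biUnion]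
  exact fun i _ j _ hij => disjoint_filter.2 fun _ _ hi hj => Set.disjoint_left.1 (h hij) hi hj

lemma gf_singleton (w : List α) :
    gf R {w} = monomial (Multiset.toFinsupp (w : Multiset α)) 1 := by
  classical
  ext d
  rw [coeff_gf, coeff_monomial]
  simp only [mem_singleton, filter_eq', mem_wordsWithContent, eq_comm (a := d)]
  split_ifs <;> simp

lemma gf_one : gf R (1 : Language α) = 1 := by
  rw [show (1 : Language α) = {[]} from rfl, gf_singleton]
  simp

lemma gf_singleton_X (a : α) : gf R ({[a]} : Language α) = X a := by
  rw [gf_singleton, X_def]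
  simp

lemma gf_sub_one {R : Type*} [CommRing R] {L : Language α} (h : [] ∈ L) :
    gf R (L - 1) = gf R L - 1 := by
  have hL : L = 1 + (L - 1) := ext fun l => by
    rw [mem_add, mem_one, mem_sub, mem_one]
    by_cases hl : l = [] <;> simp [hl, h]
  rw [eq_sub_iff_add_eq, add_comm, ← gf_one (R := R), ← gf_add, ← hL]
  exact Set.disjoint_left.2 fun _ h₁ h₂ => h₂.2 h₁

lemma gf_mul {L M : Language α}
    (h : ∀ u₁ ∈ L, ∀ v₁ ∈ M, ∀ u₂ ∈ L, ∀ v₂ ∈ M, u₁ ++ v₁ = u₂ ++ v₂ → u₁ = u₂) :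
    gf R (L * M) = gf R L * gf R M := by
  classical
  ext d
  rw [coeff_mul]
  simp only [coeff_gf, ← Nat.cast_mul, ← card_product, ← Nat.cast_sum, ← card_sigma]
  congr 1
  symm
  refine card_bij (fun x _ => x.2.1 ++ x.2.2) ?_ ?_ ?_
  · rintro ⟨⟨d₁, d₂⟩, u, v⟩ hx
    simp only [mem_sigma, mem_product, mem_filter, mem_wordsWithContent,
      HasAntidiagonal.mem_antidiagonal] at hx ⊢
    obtain ⟨hd, ⟨hu, huL⟩, hv, hvM⟩ := hx
    refine ⟨?_, append_mem_mul huL hvM⟩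
    rw [← Multiset.coe_add, map_add, hu, hv, hd]
  · rintro ⟨⟨d₁, d₂⟩, u₁, v₁⟩ hx₁ ⟨⟨e₁, e₂⟩, u₂, v₂⟩ hx₂ heq
    simp only [mem_sigma, mem_product, mem_filter, mem_wordsWithContent,
      HasAntidiagonal.mem_antidiagonal] at hx₁ hx₂
    obtain rfl := h u₁ hx₁.2.1.2 v₁ hx₁.2.2.2 u₂ hx₂.2.1.2 v₂ hx₂.2.2.2 heq
    obtain rfl := List.append_cancel_left heq
    rw [← hx₁.2.1.1, ← hx₁.2.2.1, ← hx₂.2.1.1, ← hx₂.2.2.1]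
  · intro l hl
    simp only [mem_filter, mem_wordsWithContent, mem_mul] at hl
    obtain ⟨hd, u, hu, v, hv, rfl⟩ := hl
    refine ⟨⟨(Multiset.toFinsupp (u : Multiset α), Multiset.toFinsupp (v : Multiset α)), u, v⟩,
      ?_, rfl⟩
    simp only [mem_sigma, mem_product, mem_filter, mem_wordsWithContent,
      HasAntidiagonal.mem_antidiagonal]
    refine ⟨?_, ⟨trivial, hu⟩, trivial, hv⟩
    rw [← map_add, Multiset.coe_add, hd]

lemma gf_singleton_mul (w : List α) (L : Language α) : gf R ({w} * L) = gf R {w} * gf R L :=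
  gf_mul fun _ h₁ _ _ _ h₂ _ _ _ => h₁.trans h₂.symm

end Language

namespace List

variable {α : Type*}

lemma takeWhile_ne_append [DecidableEq α] {a : α} {w v : List α} (hw : ∀ x ∈ w, x ≠ a)
    (hv : ∀ x ∈ v.head?, x = a) : (w ++ v).takeWhile (fun x => decide (x ≠ a)) = w := by
  rw [takeWhile_append_of_pos (by simpa using hw)]
  cases v with
  | nil => simp
  | cons y v => simp [hv y rfl]

lemma eq_of_append_eq_append_of_forall_ne {a : α} {w₁ w₂ v₁ v₂ : List α}
    (hw₁ : ∀ x ∈ w₁, x ≠ a) (hw₂ : ∀ x ∈ w₂, x ≠ a)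
    (hv₁ : ∀ x ∈ v₁.head?, x = a) (hv₂ : ∀ x ∈ v₂.head?, x = a) (h : w₁ ++ v₁ = w₂ ++ v₂) :
    w₁ = w₂ := by
  classical
  rw [← takeWhile_ne_append hw₁ hv₁, h, takeWhile_ne_append hw₂ hv₂]

end List

section Smirnov

open Language

variable {α : Type*}

def smirnovAvoiding (a : α) : Language α :=
  {l | l.IsChain (· ≠ ·) ∧ ∀ x ∈ l, x ≠ a}

/-- The words `a w₁ a w₂ ⋯ a wₖ` with each `wᵢ` a nonempty Smirnov word avoiding `a`. -/
def smirnovBlocks (a : α) : Language α :=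
  {l | l.IsChain (· ≠ ·) ∧ (∀ x ∈ l.head?, x = a) ∧ l.getLast? ≠ some a}

variable (α) in
def circularSmirnov : Language α :=
  {l | l ≠ [] ∧ l.IsChain (· ≠ ·) ∧ (l.length = 1 ∨ l.head? ≠ l.getLast?)}

def circularSmirnovFrom (a : α) : Language α :=
  {l | l ∈ circularSmirnov α ∧ l.head? = some a}

@[simp] lemma mem_smirnovAvoiding {a : α} {l : List α} :
    l ∈ smirnovAvoiding a ↔ l.IsChain (· ≠ ·) ∧ ∀ x ∈ l, x ≠ a := Iff.rfl

@[simp] lemma mem_smirnovBlocks {a : α} {l : List α} :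
    l ∈ smirnovBlocks a ↔
      l.IsChain (· ≠ ·) ∧ (∀ x ∈ l.head?, x = a) ∧ l.getLast? ≠ some a := Iff.rfl

@[simp] lemma mem_circularSmirnov {l : List α} :
    l ∈ circularSmirnov α ↔
      l ≠ [] ∧ l.IsChain (· ≠ ·) ∧ (l.length = 1 ∨ l.head? ≠ l.getLast?) := Iff.rfl

@[simp] lemma mem_circularSmirnovFrom {a : α} {l : List α} :
    l ∈ circularSmirnovFrom a ↔ l ∈ circularSmirnov α ∧ l.head? = some a := Iff.rfl

lemma cons_append_mem_smirnovBlocks {a : α} {w v : List α}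
    (hw : w ∈ smirnovAvoiding a - 1) (hv : v ∈ smirnovBlocks a) :
    a :: (w ++ v) ∈ smirnovBlocks a := by
  obtain ⟨⟨hw_chain, hw_ne⟩, hw_one⟩ := hw
  obtain ⟨hv_chain, hv_head, hv_last⟩ := hv
  have hw_nil : w ≠ [] := hw_one
  refine ⟨(hw_chain.append hv_chain ?_).cons ?_, fun x hx => by simpa using hx.symm, ?_⟩
  · exact fun x hx y hy => hv_head y hy ▸ hw_ne x (List.mem_of_mem_getLast? hx)
  · intro y hy
    rw [List.head?_append_of_ne_nil _ hw_nil] at hy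
    exact (hw_ne y (List.mem_of_mem_head? hy)).symm
  · rw [← List.singleton_append, List.getLast?_append_of_ne_nil _ (by simp [hw_nil]),
      List.getLast?_append]
    cases hvl : v.getLast? with
    | none => exact fun h => hw_ne a (List.mem_of_mem_getLast? h) rfl
    | some b => simpa [hvl] using hv_last

lemma exists_cons_append_of_mem_smirnovBlocks {a : α} {l : List α}
    (hl : l ∈ smirnovBlocks a) (hne : l ≠ []) :
    ∃ w ∈ smirnovAvoiding a - 1, ∃ v ∈ smirnovBlocks a, l = a :: (w ++ v) := by
  classical
  obtain ⟨hchain, hhead, hlast⟩ := hl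
  obtain ⟨x, t, rfl⟩ := List.exists_cons_of_ne_nil hne
  obtain rfl : x = a := hhead x rfl
  set p : α → Bool := fun y => decide (y ≠ x)
  have ht : t ≠ [] := by rintro rfl; exact hlast rfl
  refine ⟨t.takeWhile p, ⟨⟨hchain.tail.prefix (List.takeWhile_prefix p), fun y hy => ?_⟩, ?_⟩,
    t.dropWhile p, ⟨hchain.tail.suffix (List.dropWhile_suffix p), fun y hy => ?_, fun h => ?_⟩,
    by rw [List.takeWhile_append_dropWhile]⟩
  · simpa [p] using List.mem_takeWhile_imp hy
  · obtain ⟨y, s, rfl⟩ := List.exists_cons_of_ne_nil ht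
    have hy : y ≠ x := (List.isChain_cons_cons.1 hchain).1.symm
    rw [List.takeWhile_cons_of_pos (by simpa [p] using hy)]
    exact List.cons_ne_nil _ _
  · have hd : t.dropWhile p ≠ [] := List.ne_nil_of_mem (List.mem_of_mem_head? hy)
    rw [List.head?_eq_some_head hd, Option.mem_some_iff] at hy
    simpa [p, ← hy] using List.head_dropWhile_not p hd
  · apply hlast
    rw [← List.takeWhile_append_dropWhile (p := p) (l := t), ← List.cons_append,
      List.getLast?_append, h]
    rfl

lemma smirnovBlocks_eq (a : α) :
    smirnovBlocks a = 1 + {[a]} * ((smirnovAvoiding a - 1) * smirnovBlocks a) := by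
  ext l
  simp only [mem_add, mem_one, mem_mul]
  constructor
  · intro hl
    rcases eq_or_ne l [] with rfl | hne
    · exact Or.inl rfl
    · obtain ⟨w, hw, v, hv, rfl⟩ := exists_cons_append_of_mem_smirnovBlocks hl hne
      exact Or.inr ⟨[a], rfl, w ++ v, ⟨w, hw, v, hv, rfl⟩, rfl⟩
  · rintro (rfl | ⟨u, hu, r, ⟨w, hw, v, hv, rfl⟩, rfl⟩)
    · exact ⟨List.isChain_nil, by simp, by simp⟩
    · rw [Language.mem_singleton.1 hu]
      exact cons_append_mem_smirnovBlocks (w := w) hw hv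

lemma one_add_circularSmirnovFrom (a : α) :
    1 + circularSmirnovFrom a = {[a]} + smirnovBlocks a := by
  ext l
  rw [mem_add, mem_add, mem_one, Language.mem_singleton]
  rcases l with _ | ⟨x, _ | ⟨y, s⟩⟩
  · simp
  · simp
  · rcases eq_or_ne x a with rfl | hxa
    · simp [eq_comm (a := some x), and_assoc]
    · simp [hxa]

lemma circularSmirnov_eq_iSup : circularSmirnov α = ⨆ a, circularSmirnovFrom a :=
  ext fun l => by
    rw [mem_iSup]
    exact ⟨fun h => ⟨l.head h.1, h, List.head?_eq_some_head h.1⟩, fun ⟨_, h, _⟩ => h⟩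

lemma pairwise_disjoint_circularSmirnovFrom :
    Pairwise (Disjoint on circularSmirnovFrom (α := α)) := fun _ _ hab =>
  Set.disjoint_left.2 fun _ ha hb => hab (Option.some_injective _ (ha.2.symm.trans hb.2))

variable {k : Type*} [Field k] [DecidableEq α]

lemma gf_smirnovBlocks (a : α) :
    gf k (smirnovBlocks a) = (1 - X a * (gf k (smirnovAvoiding a) - 1))⁻¹ := by
  have hdisj : Disjoint 1 ({[a]} * ((smirnovAvoiding a - 1) * smirnovBlocks a)) :=
    Set.disjoint_left.2 fun l (hl : l = []) hmul => by
      obtain ⟨u, hu, r, -, rfl⟩ := mem_mul.1 hmul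
      rw [Language.mem_singleton.1 hu] at hl
      exact List.cons_ne_nil _ _ hl
  have h := congrArg (gf k) (smirnovBlocks_eq a)
  rw [gf_add hdisj, gf_singleton_mul, gf_one, gf_singleton_X,
    gf_mul fun w₁ hw₁ v₁ hv₁ w₂ hw₂ v₂ hv₂ =>
      List.eq_of_append_eq_append_of_forall_ne hw₁.1.2 hw₂.1.2 hv₁.2.1 hv₂.2.1,
    gf_sub_one (mem_smirnovAvoiding.2 ⟨List.isChain_nil, by simp⟩)] at h
  rw [MvPowerSeries.eq_inv_iff_mul_eq_one (by simp)]
  linear_combination h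

lemma gf_circularSmirnovFrom (a : α) :
    gf k (circularSmirnovFrom a) = X a - 1 + gf k (smirnovBlocks a) := by
  have hdisj₁ : Disjoint 1 (circularSmirnovFrom a) :=
    Set.disjoint_left.2 fun l (hl : l = []) h => h.1.1 hl
  have hdisj₂ : Disjoint {[a]} (smirnovBlocks a) :=
    Set.disjoint_left.2 fun l hl h => by
      rw [Language.mem_singleton.1 hl] at h
      exact h.2.2 rfl
  have h := congrArg (gf k) (one_add_circularSmirnovFrom a)
  rw [gf_add hdisj₁, gf_add hdisj₂, gf_one, gf_singleton_X] at h
  linear_combination h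

theorem gf_circularSmirnov [Fintype α] :
    gf k (circularSmirnov α) =
      ∑ a, (X a - 1 + (1 - X a * (gf k (smirnovAvoiding a) - 1))⁻¹) := by
  rw [circularSmirnov_eq_iSup, gf_iSup pairwise_disjoint_circularSmirnovFrom]
  simp only [gf_circularSmirnovFrom, gf_smirnovBlocks]

end Smirnov

open Language in
theorem circular_smirnov_gf_general (n : ℕ)
    (C : MvPowerSeries (Fin n) ℚ) (S : Fin n → MvPowerSeries (Fin n) ℚ)
    (hC : ∀ d : Fin n →₀ ℕ,
      MvPowerSeries.coeff d C =
        (Nat.card {l : List (Fin n) //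
          l ≠ [] ∧ l.Chain' (· ≠ ·) ∧
          (l.length = 1 ∨ l.head? ≠ l.getLast?) ∧
          ∀ j : Fin n, l.count j = d j} : ℚ))
    (hS : ∀ (a : Fin n) (d : Fin n →₀ ℕ),
      MvPowerSeries.coeff d (S a) =
        (Nat.card {l : List (Fin n) //
          l.Chain' (· ≠ ·) ∧ (∀ x ∈ l, x ≠ a) ∧
          ∀ j : Fin n, l.count j = d j} : ℚ)) :
    C = ∑ a : Fin n,
      (MvPowerSeries.X a - 1 + (1 - MvPowerSeries.X a * (S a - 1))⁻¹) := by
  have hC' : C = gf ℚ (circularSmirnov (Fin n)) := eq_gf_of_coeff fun d => by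
    simp only [hC, mem_circularSmirnov, and_assoc]
    rfl
  have hS' : ∀ a, S a = gf ℚ (smirnovAvoiding a) := fun a => eq_gf_of_coeff fun d => by
    simp only [hS, mem_smirnovAvoiding, and_assoc]
    rfl
  simp only [hC', hS', gf_circularSmirnov]

theorem circular_smirnov_gf (n : ℕ) (hn : 0 < n)
    (C : MvPowerSeries (Fin n) ℚ) (S : Fin n → MvPowerSeries (Fin n) ℚ)
    (hC : ∀ d : Fin n →₀ ℕ,
      MvPowerSeries.coeff d C =
        (Nat.card {l : List (Fin n) //
          l ≠ [] ∧ l.Chain' (· ≠ ·) ∧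
          (l.length = 1 ∨ l.head? ≠ l.getLast?) ∧
          ∀ j : Fin n, l.count j = d j} : ℚ))
    (hS : ∀ (a : Fin n) (d : Fin n →₀ ℕ),
      MvPowerSeries.coeff d (S a) =
        (Nat.card {l : List (Fin n) //
          l.Chain' (· ≠ ·) ∧ (∀ x ∈ l, x ≠ a) ∧
          ∀ j : Fin n, l.count j = d j} : ℚ)) :
    C = ∑ a : Fin n,
      (MvPowerSeries.X a - 1 + (1 - MvPowerSeries.X a * (S a - 1))⁻¹) :=
  circular_smirnov_gf_general n C S hC hS
end

section
/- Let n be a positive integer. Define S ∈ MvPowerSeries (Fin n) ℚ by: for every d : Fin n →₀ ℕ, the coefficient of S at d is the number of lists over Fin n in which any two consecutive entries are distinct and each letter j occurs exactly d j times (in particular the constant coefficient is 1, counting the empty list). Then S * (1 − Σ_{j ∈ Fin n} X_j * (1 + X_j)⁻¹) = 1 in MvPowerSeries (Fin n) ℚ, where for each j the inverse (1 + X_j)⁻¹ is the multiplicative inverse in MvPowerSeries (Fin n) ℚ (which exists since 1 + X_j has constant coefficient 1). -/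
/-!
Sort the nonempty Smirnov words by their last letter and let `E j` be the series of those ending
in `j`. Appending `j` is a bijection from the Smirnov words of content `d` not ending in `j` onto
those of content `d + e_j` ending in `j`, so `E j = X j * (S - E j)`, i.e.
`E j = S * X j * (1 + X j)⁻¹`. Summing over `j` gives `S = 1 + S * ∑ j, X j * (1 + X j)⁻¹`.
-/

open MvPowerSeries

section SmirnovWords

variable {σ : Type*} [DecidableEq σ]

noncomputable def smirnovWords (d : σ →₀ ℕ) : Finset (List σ) :=
  (Multiset.lists (Finsupp.toMultiset d)).toFinset.filter (·.IsChain (· ≠ ·))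

theorem mem_smirnovWords {d : σ →₀ ℕ} {l : List σ} :
    l ∈ smirnovWords d ↔ l.IsChain (· ≠ ·) ∧ Multiset.toFinsupp l = d := by
  simp only [smirnovWords, Finset.mem_filter, Multiset.mem_toFinset, Multiset.mem_lists_iff,
    Multiset.quot_mk_to_coe, eq_comm (a := Finsupp.toMultiset d), ← Multiset.toFinsupp_eq_iff,
    and_comm]

theorem card_smirnovWords_eq_natCard (d : σ →₀ ℕ) :
    (smirnovWords d).card =
      Nat.card {l : List σ // l.IsChain (· ≠ ·) ∧ ∀ j, l.count j = d j} := by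
  have h (l : List σ) : l ∈ smirnovWords d ↔ l.IsChain (· ≠ ·) ∧ ∀ j, l.count j = d j := by
    simp [mem_smirnovWords, Finsupp.ext_iff]
  rw [← Nat.card_eq_finsetCard]
  exact Nat.card_congr (Equiv.subtypeEquivRight h)

theorem nil_mem_smirnovWords {d : σ →₀ ℕ} : [] ∈ smirnovWords d ↔ d = 0 := by
  simp [mem_smirnovWords, eq_comm]

theorem concat_mem_smirnovWords {d : σ →₀ ℕ} {l : List σ} {j : σ} :
    l ++ [j] ∈ smirnovWords (d + Finsupp.single j 1) ↔
      l ∈ smirnovWords d ∧ l.getLast? ≠ some j := by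
  simp only [mem_smirnovWords, List.isChain_append, List.IsChain.singleton, Option.mem_def,
    List.head?_cons, Option.some.injEq, forall_eq', true_and, ← Multiset.coe_add,
    Multiset.coe_singleton, Multiset.toFinsupp_add, Multiset.toFinsupp_singleton, add_left_inj]
  grind

theorem card_smirnovWords_eq_sum_card_getLast [Fintype σ] (d : σ →₀ ℕ) :
    (smirnovWords d).card = (if d = 0 then 1 else 0) +
      ∑ j, {l ∈ smirnovWords d | l.getLast? = some j}.card := by
  rw [Finset.card_eq_sum_card_fiberwise (f := List.getLast?) (t := Finset.univ)
    fun _ _ => Finset.mem_univ _, Fintype.sum_option]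
  congr 1
  split_ifs with hd
  · refine Finset.card_eq_one.mpr ⟨[], Finset.eq_singleton_iff_unique_mem.mpr ⟨?_, ?_⟩⟩
    · exact Finset.mem_filter.mpr ⟨nil_mem_smirnovWords.mpr hd, rfl⟩
    · exact fun l hl => List.getLast?_eq_none_iff.mp (Finset.mem_filter.mp hl).2
  · exact Finset.card_eq_zero.mpr (Finset.filter_eq_empty_iff.mpr fun l hl hnil => hd
      (nil_mem_smirnovWords.mp (List.getLast?_eq_none_iff.mp hnil ▸ hl)))

theorem card_filter_getLast_eq_of_not_le {d : σ →₀ ℕ} {j : σ} (h : ¬Finsupp.single j 1 ≤ d) :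
    {l ∈ smirnovWords d | l.getLast? = some j}.card = 0 := by
  refine Finset.card_eq_zero.mpr (Finset.filter_eq_empty_iff.mpr fun l hl hlast => h ?_)
  rw [Finsupp.single_le_iff, ← (mem_smirnovWords.mp hl).2, Multiset.toFinsupp_apply,
    Multiset.coe_count]
  exact List.count_pos_iff.mpr (List.mem_of_getLast? hlast)

theorem card_filter_getLast_add_single (d : σ →₀ ℕ) (j : σ) :
    {l ∈ smirnovWords (d + Finsupp.single j 1) | l.getLast? = some j}.card +
      {l ∈ smirnovWords d | l.getLast? = some j}.card = (smirnovWords d).card := by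
  rw [← Finset.card_filter_add_card_filter_not (s := smirnovWords d) (fun l => l.getLast? = some j),
    add_comm]
  congr 1
  symm
  refine Finset.card_nbij' (· ++ [j]) List.dropLast ?_ ?_ ?_ ?_
  · intro l hl
    rw [Finset.mem_coe, Finset.mem_filter] at hl ⊢
    exact ⟨concat_mem_smirnovWords.mpr hl, List.getLast?_concat⟩
  · intro l hl
    rw [Finset.mem_coe, Finset.mem_filter] at hl ⊢
    rw [← List.dropLast_append_getLast? j hl.2] at hl
    exact concat_mem_smirnovWords.mp hl.1
  · exact fun l _ => List.dropLast_concat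
  · exact fun l hl => List.dropLast_append_getLast? j (Finset.mem_filter.mp hl).2

end SmirnovWords

section SmirnovSeries

variable (σ : Type*) [DecidableEq σ] (R : Type*) [Semiring R]

noncomputable def smirnovSeries : MvPowerSeries σ R :=
  fun d => (smirnovWords d).card

variable {σ} in
noncomputable def smirnovSeriesEndingWith (j : σ) : MvPowerSeries σ R :=
  fun d => {l ∈ smirnovWords d | l.getLast? = some j}.card

theorem coeff_smirnovSeries (d : σ →₀ ℕ) :
    coeff d (smirnovSeries σ R) = (smirnovWords d).card :=
  rfl

variable {σ} in
theorem coeff_smirnovSeriesEndingWith (j : σ) (d : σ →₀ ℕ) :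
    coeff d (smirnovSeriesEndingWith R j) = {l ∈ smirnovWords d | l.getLast? = some j}.card :=
  rfl

theorem smirnovSeries_eq_one_add_sum [Fintype σ] :
    smirnovSeries σ R = 1 + ∑ j, smirnovSeriesEndingWith R j := by
  ext d
  rw [coeff_smirnovSeries, card_smirnovWords_eq_sum_card_getLast, map_add, coeff_one, map_sum]
  simp only [coeff_smirnovSeriesEndingWith]
  norm_cast

variable {σ} in
theorem X_mul_smirnovSeries (j : σ) :
    X j * smirnovSeries σ R = (1 + X j) * smirnovSeriesEndingWith R j := by
  ext d
  rw [add_mul, one_mul, map_add, X, coeff_monomial_mul, coeff_monomial_mul]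
  split_ifs with h
  · obtain ⟨d, rfl⟩ := exists_add_of_le h
    rw [add_comm, add_tsub_cancel_right, one_mul, one_mul, coeff_smirnovSeries,
      coeff_smirnovSeriesEndingWith, coeff_smirnovSeriesEndingWith,
      ← card_filter_getLast_add_single d j]
    norm_cast
  · rw [coeff_smirnovSeriesEndingWith, card_filter_getLast_eq_of_not_le h, Nat.cast_zero,
      add_zero]

theorem smirnovSeries_mul_one_sub_sum [Fintype σ] (k : Type*) [Field k] :
    smirnovSeries σ k * (1 - ∑ j, X j * (1 + X j)⁻¹) = 1 := by
  have hE (j : σ) : smirnovSeriesEndingWith k j = smirnovSeries σ k * (X j * (1 + X j)⁻¹) := by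
    have hinv : (1 + X j)⁻¹ * (1 + X j) = (1 : MvPowerSeries σ k) :=
      MvPowerSeries.inv_mul_cancel _ (by simp)
    calc smirnovSeriesEndingWith k j
        = (1 + X j)⁻¹ * ((1 + X j) * smirnovSeriesEndingWith k j) := by
          rw [← mul_assoc, hinv, one_mul]
      _ = (1 + X j)⁻¹ * (X j * smirnovSeries σ k) := by rw [X_mul_smirnovSeries]
      _ = smirnovSeries σ k * (X j * (1 + X j)⁻¹) := by ring
  rw [mul_sub, mul_one, Finset.mul_sum, ← Finset.sum_congr rfl fun j _ => hE j]
  linear_combination smirnovSeries_eq_one_add_sum σ k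

end SmirnovSeries

theorem smirnov_gf_general (n : ℕ)
    (S : MvPowerSeries (Fin n) ℚ)
    (hS : ∀ d : Fin n →₀ ℕ,
      MvPowerSeries.coeff d S =
        (Nat.card {l : List (Fin n) //
          l.Chain' (· ≠ ·) ∧ ∀ j : Fin n, l.count j = d j} : ℚ)) :
    S * (1 - ∑ j : Fin n, MvPowerSeries.X j * (1 + MvPowerSeries.X j)⁻¹) = 1 := by
  have hS' : S = smirnovSeries (Fin n) ℚ := by
    ext d
    rw [hS, coeff_smirnovSeries, card_smirnovWords_eq_natCard]
    rfl
  rw [hS']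
  exact smirnovSeries_mul_one_sub_sum (Fin n) ℚ

theorem smirnov_gf (n : ℕ) (hn : 0 < n)
    (S : MvPowerSeries (Fin n) ℚ)
    (hS : ∀ d : Fin n →₀ ℕ,
      MvPowerSeries.coeff d S =
        (Nat.card {l : List (Fin n) //
          l.Chain' (· ≠ ·) ∧ ∀ j : Fin n, l.count j = d j} : ℚ)) :
    S * (1 - ∑ j : Fin n, MvPowerSeries.X j * (1 + MvPowerSeries.X j)⁻¹) = 1 :=
  smirnov_gf_general n S hS
end

section
/- Let r be a positive integer and let A ∈ ℚ[[X]] be any formal power series in one variable over ℚ. Then there exists a unique formal power series P ∈ ℚ[[X]] with constant coefficient 0 such that P = X * (A(P))^r, where A(P) denotes the substitution of P into A (well defined because P has zero constant coefficient). -/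
/-- Substitution of a formal power series `P` (intended to have zero constant coefficient)
into a formal power series `A`: the coefficient of `X^n` in `A(P)` is the coefficient of
`X^n` in the partial sum `∑_{k ≤ n} (coeff k A) • P^k`, which is correct since, when the
constant coefficient of `P` is zero, `P^k` contributes nothing in degree `n` for `k > n`. -/
noncomputable def substSeries (P A : PowerSeries ℚ) : PowerSeries ℚ :=
  PowerSeries.mk fun n =>
    PowerSeries.coeff n
      (∑ k ∈ Finset.range (n + 1), PowerSeries.C (PowerSeries.coeff k A) * P ^ k)

/-!
The map `Φ P = X * A(P)^r` is a contraction for the `X`-adic topology: if `P` and `Q` agree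
below degree `n`, then so do `A(P)` and `A(Q)`, and the factor `X` makes `Φ P` and `Φ Q`
agree below degree `n + 1`. The unique fixed point is the coefficientwise limit of the
iterates `Φ^[n] 0`, whose coefficient of degree `m` is already stable from `n = m + 1` on.
-/

open PowerSeries

namespace PowerSeries

section Semiring

variable {R : Type*} [Semiring R]

theorem trunc_eq_trunc_iff {n : ℕ} {f g : R⟦X⟧} :
    trunc n f = trunc n g ↔ ∀ m < n, coeff m f = coeff m g := by
  simp only [Polynomial.ext_iff, coeff_trunc]
  refine ⟨fun h m hm => by simpa [hm] using h m, fun h m => ?_⟩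
  split_ifs with hm
  exacts [h m hm, rfl]

theorem trunc_succ_X_mul_eq_of_trunc_eq {n : ℕ} {f g : R⟦X⟧} (h : trunc n f = trunc n g) :
    trunc (n + 1) (X * f) = trunc (n + 1) (X * g) := by
  rw [trunc_eq_trunc_iff] at h ⊢
  rintro (_ | m) hm
  · simp
  · rw [coeff_succ_X_mul, coeff_succ_X_mul]
    exact h m (by omega)

def IsTruncContraction (Φ : R⟦X⟧ → R⟦X⟧) : Prop :=
  ∀ n f g, trunc n f = trunc n g → trunc (n + 1) (Φ f) = trunc (n + 1) (Φ g)

namespace IsTruncContraction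

variable {Φ : R⟦X⟧ → R⟦X⟧}

theorem trunc_iterate_eq_of_le (hΦ : IsTruncContraction Φ) {n m : ℕ} (hnm : n ≤ m)
    (f₀ : R⟦X⟧) :
    trunc n (Φ^[n] f₀) = trunc n (Φ^[m] f₀) := by
  induction n generalizing m with
  | zero => rfl
  | succ n ih =>
    obtain ⟨m, rfl⟩ : ∃ k, m = k + 1 := ⟨m - 1, by omega⟩
    rw [Function.iterate_succ_apply', Function.iterate_succ_apply']
    exact hΦ _ _ _ (ih (by omega))

theorem eq_of_isFixedPt (hΦ : IsTruncContraction Φ) {f g : R⟦X⟧} (hf : Φ f = f)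
    (hg : Φ g = g) : f = g := by
  have htrunc : ∀ n, trunc n f = trunc n g := by
    intro n
    induction n with
    | zero => rfl
    | succ n ih => rw [← hf, ← hg]; exact hΦ _ _ _ ih
  ext n
  exact trunc_eq_trunc_iff.mp (htrunc (n + 1)) n n.lt_succ_self

theorem exists_isFixedPt (hΦ : IsTruncContraction Φ) : ∃ f : R⟦X⟧, Φ f = f := by
  set f : R⟦X⟧ := mk fun n => coeff n (Φ^[n + 1] 0)
  have hf : ∀ n, trunc n f = trunc n (Φ^[n] 0) := fun n =>
    trunc_eq_trunc_iff.mpr fun m hm => by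
      rw [coeff_mk]
      exact trunc_eq_trunc_iff.mp (hΦ.trunc_iterate_eq_of_le (by omega) 0) m m.lt_succ_self
  refine ⟨f, ext fun n => ?_⟩
  rw [coeff_mk, Function.iterate_succ_apply']
  exact trunc_eq_trunc_iff.mp (hΦ _ _ _ (hf n)) n n.lt_succ_self

theorem existsUnique_isFixedPt (hΦ : IsTruncContraction Φ) : ∃! f : R⟦X⟧, Φ f = f :=
  existsUnique_of_exists_of_unique hΦ.exists_isFixedPt fun _ _ => hΦ.eq_of_isFixedPt

end IsTruncContraction

end Semiring

theorem trunc_pow_eq_of_trunc_eq {R : Type*} [CommSemiring R] {n : ℕ} {f g : R⟦X⟧}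
    (h : trunc n f = trunc n g) (k : ℕ) : trunc n (f ^ k) = trunc n (g ^ k) := by
  rw [← trunc_trunc_pow f n k, ← trunc_trunc_pow g n k, h]

end PowerSeries

theorem trunc_substSeries_eq_of_trunc_eq {n : ℕ} {P Q : ℚ⟦X⟧} (A : ℚ⟦X⟧)
    (h : trunc n P = trunc n Q) : trunc n (substSeries P A) = trunc n (substSeries Q A) :=
  trunc_eq_trunc_iff.mpr fun m hm => by
    simp only [substSeries, coeff_mk, map_sum, coeff_C_mul,
      trunc_eq_trunc_iff.mp (trunc_pow_eq_of_trunc_eq h _) m hm]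

theorem colored_hypertree_gf_exists_unique_general (r : ℕ) (A : PowerSeries ℚ) :
    ∃! P : PowerSeries ℚ,
      PowerSeries.constantCoeff P = 0 ∧
      P = PowerSeries.X * (substSeries P A) ^ r := by
  have hΦ : IsTruncContraction fun P : ℚ⟦X⟧ => X * substSeries P A ^ r :=
    fun n P Q h => trunc_succ_X_mul_eq_of_trunc_eq
      (trunc_pow_eq_of_trunc_eq (trunc_substSeries_eq_of_trunc_eq A h) r)
  obtain ⟨P, hP, huniq⟩ := hΦ.existsUnique_isFixedPt
  refine ⟨P, ⟨?_, hP.symm⟩, fun Q hQ => huniq Q hQ.2.symm⟩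
  rw [← hP]
  simp

theorem colored_hypertree_gf_exists_unique (r : ℕ) (hr : 0 < r) (A : PowerSeries ℚ) :
    ∃! P : PowerSeries ℚ,
      PowerSeries.constantCoeff P = 0 ∧
      P = PowerSeries.X * (substSeries P A) ^ r :=
  colored_hypertree_gf_exists_unique_general r A
end
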